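/- arXiv:1512.05703 — 2 statements merged into one kernel-verified Lean document; each statement's English description precedes it below -/
import Mathlib

section
/- Let T1 and T2 be two rooted (nonbinary) phylogenetic 𝒳-trees. Every agreement forest reported by applying allMulMAFs to T1 and T2 is relevant, i.e., it contains no edge e such that contracting e still yields an agreement forest for T1 and T2. -/
open scoped Classical

namespace Phylo

/-! ## Rooted multifurcating phylogenetic trees, encoded as laminar families of clusters.

A rooted (possibly multi-labeled) tree is identified with the family of clusters
(= sets of taxa below a node) of its nodes.  Leaves are the minimal clusters
("blocks"); in an ordinary phylogenetic tree all blocks are singletons, while the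
trees manipulated by the algorithm may carry set labels (contracted cherries). -/

variable {β : Type} [DecidableEq β]

/-- A cluster system: candidate representation of a rooted tree. -/
abbrev Clus (β : Type) := Finset (Finset β)

/-- Ground set (taxa set / label set `ℒ`) of a cluster system. -/
def grd (G : Clus β) : Finset β := G.sup id

/-- `A` is a block (leaf label) of `G`: a minimal cluster. -/
def IsBlock (G : Clus β) (A : Finset β) : Prop :=
  A ∈ G ∧ ∀ C ∈ G, C ⊆ A → C = A

/-- `G` is (the cluster system of) a rooted tree: a laminar family of nonempty
sets containing its ground set, in which every element lies in some block. -/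
def IsTree (G : Clus β) : Prop :=
  G.Nonempty ∧ (∀ C ∈ G, C.Nonempty) ∧
  (∀ C ∈ G, ∀ D ∈ G, C ⊆ D ∨ D ⊆ C ∨ Disjoint C D) ∧
  grd G ∈ G ∧
  (∀ x ∈ grd G, ∃ A, IsBlock G A ∧ x ∈ A)

/-- `D` is a child of `C` in `G` (a maximal proper subcluster). -/
def IsChild (G : Clus β) (D C : Finset β) : Prop :=
  D ∈ G ∧ C ∈ G ∧ D ⊂ C ∧ ∀ E ∈ G, D ⊆ E → E ⊂ C → E = D

/-- `C` is the cluster of the lowest common ancestor of `A` in `G`. -/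
def IsLca (G : Clus β) (A C : Finset β) : Prop :=
  C ∈ G ∧ A ⊆ C ∧ ∀ D ∈ G, A ⊆ D → C ⊆ D

/-- Every internal node has exactly two children. -/
def IsBin (G : Clus β) : Prop :=
  ∀ C ∈ G, ¬ IsBlock G C →
    ∃ D E, D ≠ E ∧ IsChild G D C ∧ IsChild G E C ∧
      ∀ D', IsChild G D' C → D' = D ∨ D' = E

/-- `G` is a rooted phylogenetic tree on taxa set `X` (all leaves are singletons,
bijectively labeled by `X`). -/
def IsPhylo (X : Finset β) (G : Clus β) : Prop :=
  IsTree G ∧ grd G = X ∧ ∀ x ∈ X, ({x} : Finset β) ∈ G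

/-- `G'` is a refinement of `G`: `G` is obtained from `G'` by contracting edges
(removing internal clusters); leaves are untouched. -/
def Refines (G' G : Clus β) : Prop :=
  G ⊆ G' ∧ ∀ A, IsBlock G' A ↔ IsBlock G A

/-- binary resolution of a tree. -/
def BinRes (G' G : Clus β) : Prop := Refines G' G ∧ IsBin G'

/-- Restriction `G|_A` of a tree to the taxa in `A` (suppression of degree-two
nodes happens automatically, since equal clusters are identified). -/
noncomputable def restr (G : Clus β) (A : Finset β) : Clus β :=
  (G.image (· ∩ A)).erase ∅

/-- The subtree of `G` rooted at the node with cluster `P`. -/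
noncomputable def below (G : Clus β) (P : Finset β) : Clus β :=
  G.filter (fun E => E ⊆ P)

/-- The tree `G` augmented by a new root whose extra child is a new leaf
labeled by `ρ`. -/
def aug (G : Clus β) (ρ : β) : Clus β :=
  insert {ρ} (insert (insert ρ (grd G)) G)

/-! ## Forests and (acyclic) agreement forests -/

/-- A forest on the taxa set `Y`: components are trees on disjoint taxa sets
covering `Y`. -/
def IsForestOn (Y : Finset β) (F : List (Clus β)) : Prop :=
  (∀ G ∈ F, IsTree G) ∧
  F.Pairwise (fun G H => Disjoint (grd G) (grd H)) ∧
  F.foldr (fun G s => grd G ∪ s) ∅ = Y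

/-- The in-edge of the node with cluster `C` belongs to the minimal subtree
`T(A)` of `T` spanning the taxa in `A`. -/
def EdgeInSpan (T : Clus β) (A C : Finset β) : Prop :=
  C ∈ T ∧ (A ∩ C).Nonempty ∧ ¬ A ⊆ C

/-- The node with cluster `C` belongs to the minimal subtree `T(A)` of `T`
spanning the taxa in `A`. -/
def NodeInSpan (T : Clus β) (A C : Finset β) : Prop :=
  C ∈ T ∧ (A ∩ C).Nonempty ∧ (¬ A ⊆ C ∨ IsLca T A C)

/-- Agreement forest for two already `ρ`-augmented trees `U1`, `U2`:
a forest on the common taxa set, each component a refinement of the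
corresponding restrictions, one component containing `ρ`, and the spanned
subtrees pairwise edge-disjoint in `U1` and in `U2`. -/
def IsAFρ (ρ : β) (U1 U2 : Clus β) (F : List (Clus β)) : Prop :=
  IsForestOn (grd U1) F ∧ grd U2 = grd U1 ∧
  (∀ G ∈ F, IsPhylo (grd G) G) ∧
  (∀ G ∈ F, Refines G (restr U1 (grd G)) ∧ Refines G (restr U2 (grd G))) ∧
  (∃ G ∈ F, ρ ∈ grd G) ∧
  F.Pairwise (fun G H => ∀ C, ¬ (EdgeInSpan U1 (grd G) C ∧ EdgeInSpan U1 (grd H) C)) ∧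
  F.Pairwise (fun G H => ∀ C, ¬ (EdgeInSpan U2 (grd G) C ∧ EdgeInSpan U2 (grd H) C))

/-- Agreement forest for two rooted phylogenetic `X`-trees `T1`, `T2`
(each first augmented by the new taxon `ρ ∉ X`). -/
def IsAF (X : Finset β) (ρ : β) (T1 T2 : Clus β) (F : List (Clus β)) : Prop :=
  IsAFρ ρ (aug T1 ρ) (aug T2 ρ) F

/-- Maximum agreement forest: agreement forest of minimum size. -/
def IsMAF (X : Finset β) (ρ : β) (T1 T2 : Clus β) (F : List (Clus β)) : Prop :=
  IsAF X ρ T1 T2 F ∧ ∀ F', IsAF X ρ T1 T2 F' → F.length ≤ F'.length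

/-- `F'` is obtained from `F` by contracting one edge of one component. -/
def ContractEdgeF (F F' : List (Clus β)) : Prop :=
  ∃ l1 G l2 C, F = l1 ++ G :: l2 ∧ C ∈ G ∧ C ≠ grd G ∧ ¬ IsBlock G C ∧
    F' = l1 ++ G.erase C :: l2

/-- `F` is relevant: no single edge contraction yields again an agreement forest. -/
def RelevantFor (X : Finset β) (ρ : β) (T1 T2 : Clus β) (F : List (Clus β)) : Prop :=
  ∀ F', ContractEdgeF F F' → ¬ IsAF X ρ T1 T2 F'

def IsRelMAF (X : Finset β) (ρ : β) (T1 T2 : Clus β) (F : List (Clus β)) : Prop :=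
  IsMAF X ρ T1 T2 F ∧ RelevantFor X ρ T1 T2 F

/-- Edge of the ancestor-descendant graph `AG(T1,T2,F)`. -/
def AGEdge (ρ : β) (T1 T2 : Clus β) (F : List (Clus β)) (G H : Clus β) : Prop :=
  G ∈ F ∧ H ∈ F ∧ grd G ≠ grd H ∧
  ((∃ C D E, IsLca (aug T1 ρ) (grd G) C ∧ IsLca (aug T1 ρ) (grd H) D ∧
      D ⊆ E ∧ E ⊂ C ∧ EdgeInSpan (aug T1 ρ) (grd G) E) ∨
   (∃ C D E, IsLca (aug T2 ρ) (grd G) C ∧ IsLca (aug T2 ρ) (grd H) D ∧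
      D ⊆ E ∧ E ⊂ C ∧ EdgeInSpan (aug T2 ρ) (grd G) E))

/-- Acyclic agreement forest. -/
def IsAcyclicAF (X : Finset β) (ρ : β) (T1 T2 : Clus β) (F : List (Clus β)) : Prop :=
  IsAF X ρ T1 T2 F ∧ ∀ G, ¬ Relation.TransGen (AGEdge ρ T1 T2 F) G G

/-- Maximum acyclic agreement forest. -/
def IsMAAF (X : Finset β) (ρ : β) (T1 T2 : Clus β) (F : List (Clus β)) : Prop :=
  IsAcyclicAF X ρ T1 T2 F ∧ ∀ F', IsAcyclicAF X ρ T1 T2 F' → F.length ≤ F'.length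

def IsRelMAAF (X : Finset β) (ρ : β) (T1 T2 : Clus β) (F : List (Clus β)) : Prop :=
  IsMAAF X ρ T1 T2 F ∧ RelevantFor X ρ T1 T2 F

/-! ## Rooted phylogenetic networks and the hybridization number -/

/-- A finite rooted digraph with (partially) labeled vertices. -/
structure Net (β : Type) where
  n : ℕ
  edges : Finset (Fin n × Fin n)
  root : Fin n
  lab : Fin n → Option β

def Net.rel (N : Net β) (u v : Fin N.n) : Prop := (u, v) ∈ N.edges

/-- `N` is a rooted phylogenetic network on `X`: acyclic, rooted, leaves
(out-degree 0 nodes) bijectively labeled by `X`, no node with in- and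
out-degree one. -/
def Net.IsPhyloNet (N : Net β) (X : Finset β) : Prop :=
  (∀ v, ¬ Relation.TransGen N.rel v v) ∧
  (∀ v, Relation.ReflTransGen N.rel N.root v) ∧
  (∀ v, (∀ w, ¬ N.rel v w) ↔ (∃ x ∈ X, N.lab v = some x)) ∧
  (∀ v w, N.lab v ≠ none → N.lab v = N.lab w → v = w) ∧
  (∀ x ∈ X, ∃ v, N.lab v = some x) ∧
  (∀ v, ¬ ((∃! u, N.rel u v) ∧ (∃! w, N.rel v w)))

/-- The reticulation number `r(N) = |E| - |V| + 1` of a network. -/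
def Net.ret (N : Net β) : ℕ := N.edges.card + 1 - N.n

/-- `N` displays (a refinement of) the tree `T`: there is a subgraph `E'` in
which every vertex has in-degree at most one, together with an embedding `f`
of the clusters of `T` such that parent/child clusters are connected by
directed `E'`-paths, leaves carry the correct labels, and reachability in
`E'` respects clusters. -/
def Net.Displays (N : Net β) (T : Clus β) : Prop :=
  ∃ E' : Fin N.n → Fin N.n → Prop,
    (∀ u v, E' u v → N.rel u v) ∧
    (∀ v u u', E' u v → E' u' v → u = u') ∧
    ∃ f : Finset β → Fin N.n,
      Relation.ReflTransGen E' N.root (f (grd T)) ∧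
      (∀ C D, IsChild T D C → Relation.TransGen E' (f C) (f D)) ∧
      (∀ x ∈ grd T, N.lab (f {x}) = some x) ∧
      (∀ C ∈ T, ∀ x ∈ grd T, Relation.ReflTransGen E' (f C) (f {x}) → x ∈ C)

/-- The hybridization number `h(T1,T2)`: the minimum reticulation number of a
rooted phylogenetic network on `X` displaying refinements of both trees. -/
noncomputable def hyb (X : Finset β) (T1 T2 : Clus β) : ℕ :=
  sInf { r | ∃ N : Net β, N.IsPhyloNet X ∧ N.Displays T1 ∧ N.Displays T2 ∧ N.ret = r }


/-! ## The machinery of the algorithms allMulMAFs, allMulMAFs*, ProcessCherries -/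

/-- The map `M` used for undoing cherry contractions: it maps a taxa set to
`(X₁, X₂, B)` where `B : Bool` records `⊤`/`⊥`. -/
abbrev MapT (β : Type) := Finset β → Option (Finset β × Finset β × Bool)

/-- A state of the algorithm: the tree `R`, the forest `F`, and the map `M`. -/
abbrev St (β : Type) := Clus β × List (Clus β) × MapT β

/-- Re-map the entry of `A` in `M` to `⊥`. -/
noncomputable def remapBot (M : MapT β) (A : Finset β) : MapT β :=
  fun S => if S = A then (M S).map (fun p => (p.1, p.2.1, false)) else M S

/-- Conditionally re-map the entry of `A` in `M` to `⊥`. -/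
noncomputable def remapIf (c : Prop) (A : Finset β) (M : MapT β) : MapT β :=
  fun S => if S = A ∧ c then (M S).map (fun p => (p.1, p.2.1, false)) else M S

/-- Replace one occurrence of the component `G` in the forest by `new`. -/
def ReplaceIn (F F' : List (Clus β)) (G : Clus β) (new : List (Clus β)) : Prop :=
  ∃ l1 l2, F = l1 ++ G :: l2 ∧ F' = l1 ++ new ++ l2

/-- Remove the leaf with label `A` from `R` (suppressing its parent). -/
noncomputable def rmBlock (R : Clus β) (A : Finset β) : Clus β :=
  restr R (grd R \ A)

/-- Contract the cherry `{A, C}` (in either of the two ways of the paper;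
in the cluster representation both coincide). -/
def conCh (G : Clus β) (A C : Finset β) : Clus β :=
  insert (A ∪ C) ((G.erase A).erase C)

def AllChildrenBlocks (G : Clus β) (P : Finset β) : Prop :=
  ∀ D, IsChild G D P → IsBlock G D

/-- `{A, C}` is a cherry of `R`: two leaves with a common parent all of whose
children are leaves. -/
def CherryR (R : Clus β) (A C : Finset β) : Prop :=
  A ≠ C ∧ ∃ P, IsChild R A P ∧ IsChild R C P ∧ AllChildrenBlocks R P

/-- `{A, C}` is a cherry contained in the tree `G`. -/
def CherryOf (G : Clus β) (A C : Finset β) : Prop :=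
  A ≠ C ∧ IsBlock G A ∧ IsBlock G C ∧ ∃ P, IsChild G A P ∧ IsChild G C P

def CherryF (F : List (Clus β)) (A C : Finset β) : Prop := ∃ G ∈ F, CherryOf G A C

/-- common cherry of `R` and `F`. -/
def IsCommon (R : Clus β) (F : List (Clus β)) (A C : Finset β) : Prop :=
  CherryR R A C ∧ CherryF F A C

/-- contradicting cherry of `R` and `F`. -/
def IsContra (R : Clus β) (F : List (Clus β)) (A C : Finset β) : Prop :=
  CherryR R A C ∧ ¬ CherryF F A C

/-- Leaf `A` of `R` refers to an isolated node of `F`. -/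
def IsolRef (R : Clus β) (F : List (Clus β)) (A : Finset β) : Prop :=
  IsBlock R A ∧ ({A} : Clus β) ∈ F

/-- `P` has at least three children in `G`. -/
def Deg3 (G : Clus β) (P : Finset β) : Prop :=
  ∃ D1 D2 D3, IsChild G D1 P ∧ IsChild G D2 P ∧ IsChild G D3 P ∧
    D1 ≠ D2 ∧ D1 ≠ D3 ∧ D2 ≠ D3

/-- Processing a common cherry (Case 2 of allMulMAFs): contract `{A,C}` in `R`
and in its component of `F`, and record the contraction in `M` (with `⊤` iff
both parents are multifurcating). -/
def ConApply (s : St β) (A C : Finset β) (t : St β) : Prop :=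
  IsCommon s.1 s.2.1 A C ∧
  ∃ G F', G ∈ s.2.1 ∧ CherryOf G A C ∧ ReplaceIn s.2.1 F' G [conCh G A C] ∧
  ∃ PR PG, IsChild s.1 A PR ∧ IsChild G A PG ∧
  ∃ b : Bool, ((b = true) ↔ (Deg3 s.1 PR ∧ Deg3 G PG)) ∧
    t = (conCh s.1 A C, F', Function.update s.2.2 (A ∪ C) (some (A, C, b)))

/-- The update of `M` when cutting the in-edge of the leaf `A` in its
component `G` (Case 3a of allMulMAFs). -/
def CutUpd (G : Clus β) (A : Finset β) (M M' : MapT β) : Prop :=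
  (∃ P D, IsChild G A P ∧ IsChild G D P ∧ D ≠ A ∧
      (∀ E, IsChild G E P → E = A ∨ E = D) ∧ IsBlock G D ∧ M' = remapBot M D) ∨
  ((¬ ∃ P D, IsChild G A P ∧ IsChild G D P ∧ D ≠ A ∧
      (∀ E, IsChild G E P → E = A ∨ E = D) ∧ IsBlock G D) ∧ M' = M)

/-- Cut the in-edge `e_A` of the leaf labeled `A` of a contradicting cherry
`{A, C}` in the forest. -/
def CutApply (s : St β) (A C : Finset β) (t : St β) : Prop :=
  IsContra s.1 s.2.1 A C ∧
  ∃ G F' M', G ∈ s.2.1 ∧ IsBlock G A ∧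
    ReplaceIn s.2.1 F' G [({A} : Clus β), restr G (grd G \ A)] ∧
    CutUpd G A s.2.2 M' ∧ t = (s.1, F', M')

/-- `D` is a node on the path connecting the leaves `A` and `C` in `G`. -/
def PathNode (G : Clus β) (A C D : Finset β) : Prop :=
  D ∈ G ∧ D ≠ A ∧ D ≠ C ∧
  ((A ⊆ D ∧ ¬ C ⊆ D) ∨ (C ⊆ D ∧ ¬ A ⊆ D) ∨ IsLca G (A ∪ C) D)

/-- `E` is the maximal cluster of `G` below `D` containing `A`. -/
def IsMaxSub (G : Clus β) (A D E : Finset β) : Prop :=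
  E ∈ G ∧ A ⊆ E ∧ E ⊂ D ∧ ∀ E' ∈ G, A ⊆ E' → E' ⊂ D → E' ⊆ E

/-- `P` is the ground set of the (grouped) pendant subtree hanging off the
path node `D` of the path connecting `A` and `C`. -/
def PendGround (G : Clus β) (A C D P : Finset β) : Prop :=
  PathNode G A C D ∧
  ((A ⊆ D ∧ ¬ C ⊆ D ∧ ∃ E, IsMaxSub G A D E ∧ P = D \ E) ∨
   (C ⊆ D ∧ ¬ A ⊆ D ∧ ∃ E, IsMaxSub G C D E ∧ P = D \ E) ∨
   (IsLca G (A ∪ C) D ∧ ∃ E1 E2, IsMaxSub G A D E1 ∧ IsMaxSub G C D E2 ∧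
      P = D \ (E1 ∪ E2)))

/-- The (grouped) pendant component with ground set `P`. -/
noncomputable def pendComp (G : Clus β) (P : Finset β) : Clus β :=
  insert P (below G P)

/-- The component still containing `A` and `C` after cutting all pendant
edges of the `A`–`C` path (`L` = lca of `{A, C}`). -/
noncomputable def acComp (G : Clus β) (A C L : Finset β) : Clus β :=
  (G.image (fun D => D \ (L \ (A ∪ C)))).erase ∅

/-- Cutting the set `E_B` of pendant edges of `F[A ∼ C]`: the component `G`
is replaced by the `A`–`C` component together with all grouped pendant
components. -/
def CutPend (G : Clus β) (A C : Finset β) (out : List (Clus β)) : Prop :=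
  ∃ L, IsLca G (A ∪ C) L ∧
  ∃ pend : List (Clus β),
    (∀ Q ∈ pend, ∃ D P, PendGround G A C D P ∧ P.Nonempty ∧ Q = pendComp G P) ∧
    (∀ D P, PendGround G A C D P → P.Nonempty → pendComp G P ∈ pend) ∧
    pend.Nodup ∧ out = acComp G A C L :: pend

/-- The update of `M` in Case 3b of allMulMAFs. -/
def PendUpd (G : Clus β) (A C : Finset β) (M M' : MapT β) : Prop :=
  ∃ PA PC L, IsChild G A PA ∧ IsChild G C PC ∧ IsLca G (A ∪ C) L ∧
    M' = remapIf (PA ≠ L) A (remapIf (PC ≠ L) C M)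

/-- Case 3b (third branch) of allMulMAFs: cut all pendant edges of
`F[A ∼ C]`. -/
def PendApply (s : St β) (A C : Finset β) (t : St β) : Prop :=
  IsContra s.1 s.2.1 A C ∧
  ∃ G new F' M', G ∈ s.2.1 ∧ IsBlock G A ∧ IsBlock G C ∧
    CutPend G A C new ∧ ReplaceIn s.2.1 F' G new ∧
    PendUpd G A C s.2.2 M' ∧ t = (s.1, F', M')

/-- One expansion step of a contracted cherry, as prescribed by `M`
(`b = false` is `⊥`, `b = true` is `⊤`). -/
def ExpandStep (M : MapT β) (F F' : List (Clus β)) : Prop :=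
  ∃ G A X1 X2 b, IsBlock G A ∧ M A = some (X1, X2, b) ∧
    ReplaceIn F F' G
      [if b then insert X1 (insert X2 (G.erase A)) else insert X1 (insert X2 G)]

/-- Exhaustively expand the forest `F` as prescribed in `M`. -/
def Expands (M : MapT β) (F F' : List (Clus β)) : Prop :=
  Relation.ReflTransGen (ExpandStep M) F F' ∧
  ∀ G ∈ F', ∀ A, IsBlock G A → M A = none

/-- `R` consists of a single leaf. -/
def SingleLeaf (R : Clus β) : Prop := ∃ A, R = ({A} : Clus β)

/-- Case 1c of allMulMAFs: remove a leaf of `R` referring to an isolated node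
of `F`. -/
def IsolApply (s : St β) (A : Finset β) (t : St β) : Prop :=
  IsolRef s.1 s.2.1 A ∧ t = (rmBlock s.1 A, s.2.1, remapBot s.2.2 A)

/-- One recursive call of the algorithm allMulMAFs (Cases 1c, 2, 3a, 3b),
with the priority of the cases as in the paper and the abort conditions of
Cases 1a/1b as guards. -/
def AMFStep (k : ℕ) (s t : St β) : Prop :=
  s.2.1.length ≤ k ∧ ¬ SingleLeaf s.1 ∧
  ((∃ A, IsolApply s A t) ∨
   ((¬ ∃ A, IsolRef s.1 s.2.1 A) ∧ ∃ A C, ConApply s A C t) ∨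
   ((¬ ∃ A, IsolRef s.1 s.2.1 A) ∧ (¬ ∃ A C, IsCommon s.1 s.2.1 A C) ∧
     ∃ A C, (CutApply s A C t ∨ PendApply s A C t)))

/-- The initial state: `R = T1`, `F = {T2}` (both `ρ`-augmented), `M = ∅`. -/
def initSt (T1 T2 : Clus β) (ρ : β) : St β :=
  (aug T1 ρ, [aug T2 ρ], fun _ => none)

/-- `out` is one of the forests returned by `allMulMAFs(T1, {T2}, ∅, k)`. -/
def AMFRun (T1 T2 : Clus β) (ρ : β) (k : ℕ) (out : List (Clus β)) : Prop :=
  ∃ s : St β, Relation.ReflTransGen (AMFStep k) (initSt T1 T2 ρ) s ∧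
    SingleLeaf s.1 ∧ s.2.1.length ≤ k ∧ Expands s.2.2 s.2.1 out

/-- allMAFs¹ = allMAAFs¹ of Albrecht (2015) without the acyclicity check; by
Remark 2 of the paper, on binary input trees it processes cherries exactly as
allMulMAFs does. -/
def allMAFs1Run (T1 T2 : Clus β) (ρ : β) (k : ℕ) (out : List (Clus β)) : Prop :=
  AMFRun T1 T2 ρ k out

/-! ### allMulMAFs*: pseudo cherries and preparation -/

/-- proper leaf of `R` and `F`: its counterpart in `F` is a child of a root. -/
def ProperLeaf (R : Clus β) (F : List (Clus β)) (A : Finset β) : Prop :=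
  IsBlock R A ∧ ∃ G ∈ F, IsChild G A (grd G)

/-- The leaves of `R` lying below `D`. -/
noncomputable def blocksIn (R : Clus β) (D : Finset β) : Finset (Finset β) :=
  R.filter (fun E => IsBlock R E ∧ E ⊆ D)

/-- pseudo cherry `{A, C}` for `R` and `F`. -/
def PseudoCherry (R : Clus β) (F : List (Clus β)) (A C : Finset β) : Prop :=
  IsBlock R A ∧ IsBlock R C ∧ A ≠ C ∧
  ∃ L, IsLca R (A ∪ C) L ∧
    (∀ D, IsChild R D L →
      (blocksIn R D).card ≤ ((blocksIn R D).filter (fun B => ProperLeaf R F B)).card + 1) ∧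
    (∃ B, ProperLeaf R F B ∧ B ⊆ L ∧ B ≠ A ∧ B ≠ C)

/-- `B` is a leaf pendant to the path connecting `A` and `C` in `R`. -/
def PendantOnPath (R : Clus β) (A C B : Finset β) : Prop :=
  IsBlock R B ∧ B ≠ A ∧ B ≠ C ∧ ∃ P, IsChild R B P ∧ PathNode R A C P

/-- Cut the leaf labeled `B` out of its component of the forest. -/
def CutB (B : Finset β) (F F' : List (Clus β)) : Prop :=
  ∃ G, G ∈ F ∧ IsBlock G B ∧
    ReplaceIn F F' G [({B} : Clus β), restr G (grd G \ B)]

inductive CutsList : List (Finset β) → List (Clus β) → List (Clus β) → Prop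
  | nil (F) : CutsList [] F F
  | cons (B l F F1 F') : CutB B F F1 → CutsList l F1 F' → CutsList (B :: l) F F'

/-- Preparing a pseudo cherry `{A, C}`: all pendant proper leaves on the
`A`–`C` path are removed from `R`, cut in `F`, and re-mapped to `⊥` in `M`. -/
def Prep (s : St β) (A C : Finset β) (t : St β) : Prop :=
  ∃ l : List (Finset β), l.Nodup ∧
    (∀ B, B ∈ l ↔ (PendantOnPath s.1 A C B ∧ ProperLeaf s.1 s.2.1 B)) ∧
    ∃ F', CutsList l s.2.1 F' ∧
      t = (restr s.1 (grd s.1 \ l.foldr (· ∪ ·) ∅), F',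
           l.foldr (fun B M => remapBot M B) s.2.2)

/-- Prepare `{A, C}` if it is a pseudo cherry; otherwise do nothing. -/
def PrepOpt (s : St β) (A C : Finset β) (t : St β) : Prop :=
  (CherryR s.1 A C ∧ t = s) ∨ (PseudoCherry s.1 s.2.1 A C ∧ Prep s A C t)

/-- One recursive call of the modified algorithm allMulMAFs*. -/
def AMFSStep (k : ℕ) (s t : St β) : Prop :=
  s.2.1.length ≤ k ∧ ¬ SingleLeaf s.1 ∧
  ((∃ A, IsolApply s A t) ∨
   ((¬ ∃ A, IsolRef s.1 s.2.1 A) ∧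
     ∃ A C s0, (CherryR s.1 A C ∨ PseudoCherry s.1 s.2.1 A C) ∧ PrepOpt s A C s0 ∧
       (ConApply s0 A C t ∨ CutApply s0 A C t ∨ PendApply s0 A C t)))

/-- `out` is one of the forests returned by `allMulMAFs*(T1, {T2}, ∅, k)`. -/
def AMFSRun (T1 T2 : Clus β) (ρ : β) (k : ℕ) (out : List (Clus β)) : Prop :=
  ∃ s : St β, Relation.ReflTransGen (AMFSStep k) (initSt T1 T2 ρ) s ∧
    SingleLeaf s.1 ∧ s.2.1.length ≤ k ∧ Expands s.2.2 s.2.1 out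

/-! ### ProcessCherries and cherry lists -/

/-- The four ways `∪_{ac}, ∤_a, ∤_c, ∩_{ac}` of processing a cherry. -/
inductive Phi : Type
  | con : Phi
  | cutL : Phi
  | cutR : Phi
  | path : Phi

/-- A cherry action `Λᵢ = ({a, c}, φᵢ)`. -/
structure Act (β : Type) where
  A : Finset β
  C : Finset β
  phi : Phi

def RemIsolStep (s t : St β) : Prop := ∃ A, IsolApply s A t

/-- Exhaustively remove from `R` every leaf referring to an isolated node
of `F` (line 13 of Algorithm 1). -/
def RemIsolAll (s t : St β) : Prop :=
  Relation.ReflTransGen RemIsolStep s t ∧ ¬ ∃ A, IsolRef t.1 t.2.1 A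

/-- One iteration of `ProcessCherries` on the cherry action `a` (returning a
state rather than `∅`). -/
def PCStep (a : Act β) (s t : St β) : Prop :=
  (CherryR s.1 a.A a.C ∨ PseudoCherry s.1 s.2.1 a.A a.C) ∧
  ∃ s0, PrepOpt s a.A a.C s0 ∧
  ∃ s1, ((a.phi = Phi.con ∧ ConApply s0 a.A a.C s1) ∨
         (a.phi = Phi.cutL ∧ CutApply s0 a.A a.C s1) ∨
         (a.phi = Phi.cutR ∧ CutApply s0 a.C a.A s1) ∨
         (a.phi = Phi.path ∧ PendApply s0 a.A a.C s1)) ∧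
  RemIsolAll s1 t

inductive PCRun : St β → List (Act β) → St β → Prop
  | nil (s) : PCRun s [] s
  | cons (a l s s1 t) : PCStep a s s1 → PCRun s1 l t → PCRun s (a :: l) t

/-- `Λ` is a cherry list for `T1` and `T2`: `ProcessCherries(T1, {T2}, Λ)`
does not return `∅`. -/
def CherryList (T1 T2 : Clus β) (ρ : β) (Λ : List (Act β)) : Prop :=
  ∃ s, PCRun (initSt T1 T2 ρ) Λ s

/-- `out` is the forest returned by `ProcessCherries(T1, {T2}, Λ)` (after the
final expansion). -/
def PCOut (T1 T2 : Clus β) (ρ : β) (Λ : List (Act β)) (out : List (Clus β)) : Prop :=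
  ∃ s, PCRun (initSt T1 T2 ρ) Λ s ∧ Expands s.2.2 s.2.1 out

/-- every component of `Fh` is a binary resolution of a component of `F`. -/
def BinResF (Fh F : List (Clus β)) : Prop := ∀ Gh ∈ Fh, ∃ G ∈ F, BinRes Gh G

/-- pseudo binary resolution of a forest. -/
def PseudoBinResF (Fh F : List (Clus β)) : Prop :=
  ∀ Gh ∈ Fh, ∃ G ∈ F,
    BinRes Gh G ∨ ∃ D, IsChild G D (grd G) ∧ BinRes Gh (below G D)

/-! ### Trees reflecting a forest, the expanded ancestor-descendant graph,
exit nodes, and the refinement step of allMulMAAFs -/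

/-- `U` is a tree reflecting the forest `F` with respect to `T`: a refinement
of `T` in which the components of `F` embed as node-disjoint subtrees. -/
def Reflects (U T : Clus β) (F : List (Clus β)) : Prop :=
  Refines U T ∧
  (∀ G ∈ F, Refines G (restr U (grd G))) ∧
  F.Pairwise (fun G H => ∀ C, ¬ (NodeInSpan U (grd G) C ∧ NodeInSpan U (grd H) C))

/-- `φ⁻¹`: the node `v` of the reflecting tree `U` maps back to the node
`p.2` of the component `p.1` of `F`. -/
def PhiInv (U : Clus β) (F : List (Clus β)) (v : Finset β) (p : Clus β × Finset β) : Prop :=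
  p.1 ∈ F ∧ v ∈ U ∧ NodeInSpan U (grd p.1) v ∧ p.2 = v ∩ grd p.1 ∧ p.2 ∈ p.1

/-- Hybrid edge of `AG^ex` stemming from the reflecting tree `U`, pointing
from the node `x` to the root of the component `H`. -/
def HybEdgeT (U : Clus β) (F : List (Clus β)) (x : Clus β × Finset β) (H : Clus β) : Prop :=
  H ∈ F ∧ ∃ u v', IsLca U (grd H) u ∧ v' ∈ U ∧ u ⊂ v' ∧ PhiInv U F v' x ∧
    ∀ v'' ∈ U, u ⊂ v'' → (∃ q, PhiInv U F v'' q) → v' ⊆ v''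

def Hyb1 (ρ : β) (U1 : Clus β) (F : List (Clus β)) (x y : Clus β × Finset β) : Prop :=
  ∃ H, H ∈ F ∧ ρ ∉ grd H ∧ y = (H, grd H) ∧ HybEdgeT U1 F x H

/-- Edge of the expanded ancestor-descendant graph
`AG^ex(U1, U2, F)`: a tree edge inside a component or a hybrid edge. -/
def ExEdge (ρ : β) (U1 U2 : Clus β) (F : List (Clus β)) (x y : Clus β × Finset β) : Prop :=
  (x.1 ∈ F ∧ x.1 = y.1 ∧ IsChild x.1 y.2 x.2) ∨ Hyb1 ρ U1 F x y ∨ Hyb1 ρ U2 F x y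

/-- Exit node of `AG^ex(U1, U2, F)`: the source of a hybrid edge on a directed
cycle whose preceding hybrid edge along the cycle stems from the other tree. -/
def IsExitNode (ρ : β) (U1 U2 : Clus β) (F : List (Clus β)) (v : Clus β × Finset β) : Prop :=
  ∃ m : ℕ, 0 < m ∧ ∃ c : ZMod m → Clus β × Finset β,
    (∀ i, ExEdge ρ U1 U2 F (c i) (c (i + 1))) ∧
    ∃ i : ZMod m, c i = v ∧ ∃ d : ℕ, 0 < d ∧ d < m ∧
      ((Hyb1 ρ U1 F (c i) (c (i + 1)) ∧
          Hyb1 ρ U2 F (c (i - (d : ZMod m))) (c (i - (d : ZMod m) + 1))) ∨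
       (Hyb1 ρ U2 F (c i) (c (i + 1)) ∧
          Hyb1 ρ U1 F (c (i - (d : ZMod m))) (c (i - (d : ZMod m) + 1)))) ∧
      ∀ e : ℕ, 0 < e → e < d →
        (¬ Hyb1 ρ U1 F (c (i - (e : ZMod m))) (c (i - (e : ZMod m) + 1)) ∧
         ¬ Hyb1 ρ U2 F (c (i - (e : ZMod m))) (c (i - (e : ZMod m) + 1)))

/-- Ground set of the piece obtained at the chain node `E` when cutting every
edge on the path from the node `C` to the root of its component. -/
def ChainGround (G : Clus β) (C E P : Finset β) : Prop :=
  E ∈ G ∧ C ⊂ E ∧ ∃ E', IsMaxSub G C E E' ∧ P = E \ E'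

/-- Fixing the exit node `(G, C)`: cut every edge on the path connecting `C`
with the root of `G`. -/
def FixExit (G : Clus β) (C : Finset β) (out : List (Clus β)) : Prop :=
  ∃ pend : List (Clus β),
    (∀ Q ∈ pend, ∃ E P, ChainGround G C E P ∧ Q = pendComp G P) ∧
    (∀ E P, ChainGround G C E P → pendComp G P ∈ pend) ∧
    pend.Nodup ∧ out = below G C :: pend

/-- Fix one exit node of `AG^ex(U1, U2, F)` in the forest `F`. -/
def FixExitF (ρ : β) (U1 U2 : Clus β) (F F' : List (Clus β)) : Prop :=
  ∃ v, IsExitNode ρ U1 U2 F v ∧ ∃ out, FixExit v.1 v.2 out ∧ ReplaceIn F F' v.1 out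

/-- One round of the refinement step of allMulMAAFs: build reflecting trees
`T1(F)`, `T2(F)`, build `AG^ex`, and fix an exit node. -/
def RefStep (ρ : β) (T1 T2 : Clus β) (F F' : List (Clus β)) : Prop :=
  ∃ U1 U2, Reflects U1 (aug T1 ρ) F ∧ Reflects U2 (aug T2 ρ) F ∧ FixExitF ρ U1 U2 F F'

/-- `out` is one of the forests returned by `allMulMAAFs(T1, {T2}, ∅, k)`:
an agreement forest produced by allMulMAFs, refined by repeatedly fixing exit
nodes into an acyclic agreement forest of size at most `k`. -/
def AMAAFRun (T1 T2 : Clus β) (ρ : β) (k : ℕ) (out : List (Clus β)) : Prop :=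
  ∃ mid, AMFRun T1 T2 ρ k mid ∧
    Relation.ReflTransGen (fun F F' => RefStep ρ T1 T2 F F' ∧ F'.length ≤ k) mid out ∧
    out.length ≤ k ∧ (∀ G, ¬ Relation.TransGen (AGEdge ρ T1 T2 out) G G)

/-! ### Resolving and cutting -/

/-- componentwise refinement of a forest. -/
def ResolvesF (F F' : List (Clus β)) : Prop :=
  List.Forall₂ (fun G G' => Refines G' G) F F'

/-- Cut one edge (the in-edge of the node with cluster `C`) in one component. -/
def CutF (F F' : List (Clus β)) : Prop :=
  ∃ l1 G l2 C, F = l1 ++ G :: l2 ∧ C ∈ G ∧ C ≠ grd G ∧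
    F' = l1 ++ below G C :: restr G (grd G \ C) :: l2

/-- `F'` is obtained from `F` by first resolving some multifurcating nodes and
then cutting some edges. -/
def ObtainedRC (F F' : List (Clus β)) : Prop :=
  ∃ Fm, ResolvesF F Fm ∧ Relation.ReflTransGen CutF Fm F'

/-!
Contracting a common cherry `{a, c}` records the entry `a ∪ c ↦ (a, c, b)` in `M`, and the final
expansion re-creates `a ∪ c` as an internal node exactly when `b = ⊥`. Throughout the run every
`⊥`-entry is a cluster of `T1` or of `T2` restricted to the taxa of the component of `ℱ` that
contains it. A fresh entry is `⊥` only if one of the two parents of the cherry is binary; that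
parent is then `a ∪ c` itself, an internal cluster of `R` (hence of `T1`) or of `ℱ` (hence of
`T2`). An entry re-mapped to `⊥` by a cut is the trace of a former parent on the new component.
Cuts replace a component by restrictions of it to taxa sets splitting none of its leaves, which
preserves all of this. When `R` is a single leaf, every component of `ℱ` is a single leaf, so
after the expansion every internal cluster `C` of the output is a `⊥`-entry. Contracting `C`
gives a component that no longer refines the restriction of `T1` or `T2` containing `C`.
-/

/-! ### Cluster systems and restrictions -/

lemma subset_grd {G : Clus β} {C : Finset β} (hC : C ∈ G) : C ⊆ grd G :=
  Finset.le_sup (f := id) hC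

lemma mem_grd {G : Clus β} {x : β} : x ∈ grd G ↔ ∃ C ∈ G, x ∈ C :=
  Finset.mem_sup

lemma grd_mono {G H : Clus β} (h : G ⊆ H) : grd G ⊆ grd H :=
  Finset.sup_mono h

lemma grd_singleton {A : Finset β} : grd ({A} : Clus β) = A :=
  Finset.sup_singleton

omit [DecidableEq β] in
lemma isBlock_singleton {A : Finset β} : IsBlock ({A} : Clus β) A :=
  ⟨Finset.mem_singleton_self A, fun _ hE _ => Finset.mem_singleton.1 hE⟩

lemma mem_restr {G : Clus β} {Y P : Finset β} :
    P ∈ restr G Y ↔ P ≠ ∅ ∧ ∃ C ∈ G, C ∩ Y = P := by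
  rw [restr, Finset.mem_erase, Finset.mem_image]

omit [DecidableEq β] in
lemma IsChild.not_isBlock {G : Clus β} {A P : Finset β} (h : IsChild G A P) : ¬ IsBlock G P :=
  fun hP => h.2.2.1.ne (hP.2 A h.1 h.2.2.1.1)

omit [DecidableEq β] in
lemma exists_isChild {G : Clus β} {B C : Finset β} (hB : B ∈ G) (hC : C ∈ G) (hBC : B ⊂ C) :
    ∃ D, IsChild G D C ∧ B ⊆ D := by
  obtain ⟨D, hD, hmax⟩ := (G.filter (fun E => B ⊆ E ∧ E ⊂ C)).exists_maximal
    ⟨B, Finset.mem_filter.2 ⟨hB, subset_rfl, hBC⟩⟩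
  obtain ⟨hDG, hBD, hDC⟩ := Finset.mem_filter.1 hD
  refine ⟨D, ⟨hDG, hC, hDC, fun E hE hDE hEC => ?_⟩, hBD⟩
  exact (hmax (Finset.mem_filter.2 ⟨hE, hBD.trans hDE, hEC⟩) hDE).antisymm hDE

namespace IsTree

variable {G : Clus β} (hT : IsTree G)
include hT

lemma nonempty {C : Finset β} (hC : C ∈ G) : C.Nonempty := hT.2.1 C hC

lemma laminar {C D : Finset β} (hC : C ∈ G) (hD : D ∈ G) :
    C ⊆ D ∨ D ⊆ C ∨ Disjoint C D := hT.2.2.1 C hC D hD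

lemma subset_or_subset {C D : Finset β} (hC : C ∈ G) (hD : D ∈ G)
    (h : (C ∩ D).Nonempty) : C ⊆ D ∨ D ⊆ C :=
  (hT.laminar hC hD).imp_right
    (Or.resolve_right · (Finset.not_disjoint_iff_nonempty_inter.2 h))

lemma grd_mem : grd G ∈ G := hT.2.2.2.1

lemma exists_block {x : β} (hx : x ∈ grd G) : ∃ A, IsBlock G A ∧ x ∈ A :=
  hT.2.2.2.2 x hx

lemma block_subset {B C : Finset β} (hB : IsBlock G B) (hC : C ∈ G)
    (h : (B ∩ C).Nonempty) : B ⊆ C :=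
  (hT.subset_or_subset hB.1 hC h).elim id fun h' => (hB.2 C hC h').ge

lemma exists_block_subset {x : β} {C : Finset β} (hC : C ∈ G) (hx : x ∈ C) :
    ∃ B, IsBlock G B ∧ x ∈ B ∧ B ⊆ C := by
  obtain ⟨B, hB, hxB⟩ := hT.exists_block (subset_grd hC hx)
  exact ⟨B, hB, hxB, hT.block_subset hB hC ⟨x, Finset.mem_inter.2 ⟨hxB, hx⟩⟩⟩

lemma disjoint_blocks {A B : Finset β} (hA : IsBlock G A) (hB : IsBlock G B) (hne : A ≠ B) :
    Disjoint A B := by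
  by_contra h
  exact hne (hB.2 A hA.1 (hT.block_subset hA hB.1 (Finset.not_disjoint_iff_nonempty_inter.1 h)))

lemma isChild_unique {A P Q : Finset β} (hP : IsChild G A P) (hQ : IsChild G A Q) : P = Q := by
  obtain ⟨x, hx⟩ := hT.nonempty hP.1
  rcases hT.subset_or_subset hP.2.1 hQ.2.1
      ⟨x, Finset.mem_inter.2 ⟨hP.2.2.1.1 hx, hQ.2.2.1.1 hx⟩⟩ with h | h
  · by_contra hne
    exact (hQ.2.2.2 P hP.2.1 hP.2.2.1.1 (h.lt_of_ne hne) ▸ hP.2.2.1).false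
  · by_contra hne
    exact (hP.2.2.2 Q hQ.2.1 hQ.2.2.1.1 (h.lt_of_ne (Ne.symm hne)) ▸ hQ.2.2.1).false

lemma eq_union_of_isChild {A D P : Finset β} (hA : IsChild G A P) (hD : IsChild G D P)
    (hchildren : ∀ E, IsChild G E P → E = A ∨ E = D) : P = A ∪ D := by
  refine Finset.Subset.antisymm (fun x hx => ?_) (Finset.union_subset hA.2.2.1.1 hD.2.2.1.1)
  obtain ⟨B, hB, hxB, hBP⟩ := hT.exists_block_subset hA.2.1 hx
  have hBP' : B ⊂ P := hBP.ssubset_of_ne fun h => hA.not_isBlock (h ▸ hB)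
  obtain ⟨E, hE, hBE⟩ := exists_isChild hB.1 hA.2.1 hBP'
  rcases hchildren E hE with rfl | rfl
  · exact Finset.mem_union_left _ (hBE hxB)
  · exact Finset.mem_union_right _ (hBE hxB)

lemma eq_union_of_not_deg3 {A C P : Finset β} (hA : IsChild G A P) (hC : IsChild G C P)
    (hne : A ≠ C) (hP : ¬ Deg3 G P) : P = A ∪ C := by
  refine hT.eq_union_of_isChild hA hC fun E hE => ?_
  by_contra! h
  exact hP ⟨A, C, E, hA, hC, hE, hne, Ne.symm h.1, Ne.symm h.2⟩

lemma eq_singleton_of_forall_isBlock {A : Finset β} (hA : IsBlock G A)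
    (h : ∀ B, IsBlock G B → B = A) : G = {A} := by
  have hgrd : grd G ⊆ A := fun x hx => by
    obtain ⟨B, hB, hxB⟩ := hT.exists_block hx
    exact h B hB ▸ hxB
  refine Finset.eq_singleton_iff_unique_mem.2 ⟨hA.1, fun C hC => ?_⟩
  obtain ⟨x, hx⟩ := hT.nonempty hC
  obtain ⟨B, hB, -, hBC⟩ := hT.exists_block_subset hC hx
  exact ((subset_grd hC).trans hgrd).antisymm (h B hB ▸ hBC)

lemma sdiff_block_nonempty {A : Finset β} (hA : IsBlock G A) (hG : G ≠ {A}) :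
    (grd G \ A).Nonempty := by
  obtain ⟨B, hB, hBA⟩ : ∃ B, IsBlock G B ∧ B ≠ A := by
    by_contra! h
    exact hG (hT.eq_singleton_of_forall_isBlock hA h)
  obtain ⟨x, hx⟩ := hT.nonempty hB.1
  exact ⟨x, Finset.mem_sdiff.2 ⟨subset_grd hB.1 hx,
    Finset.disjoint_left.1 (hT.disjoint_blocks hB hA hBA) hx⟩⟩

lemma grd_subset_of_blocks {R : Clus β}
    (hbl : ∀ B, IsBlock G B → IsBlock R B) : grd G ⊆ grd R := fun x hx => by
  obtain ⟨B, hB, hxB⟩ := hT.exists_block hx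
  exact subset_grd (hbl B hB).1 hxB

end IsTree

def SplitsNoBlock (G : Clus β) (Y : Finset β) : Prop :=
  ∀ B, IsBlock G B → B ⊆ Y ∨ Disjoint B Y

namespace SplitsNoBlock

variable {G : Clus β} {Y Z : Finset β}

lemma of_mem (hT : IsTree G) (hY : Y ∈ G) : SplitsNoBlock G Y := fun B hB =>
  (em (B ∩ Y).Nonempty).imp (hT.block_subset hB hY)
    (Finset.not_nonempty_iff_eq_empty.1 · |> Finset.disjoint_iff_inter_eq_empty.2)

lemma sdiff (hY : SplitsNoBlock G Y) (hZ : SplitsNoBlock G Z) : SplitsNoBlock G (Y \ Z) := by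
  intro B hB
  rcases hY B hB with hBY | hBY
  · rcases hZ B hB with hBZ | hBZ
    · exact Or.inr (Finset.disjoint_of_subset_left hBZ Finset.disjoint_sdiff)
    · exact Or.inl (Finset.subset_sdiff.2 ⟨hBY, hBZ⟩)
  · exact Or.inr (Finset.disjoint_of_subset_right Finset.sdiff_subset hBY)

lemma union (hY : SplitsNoBlock G Y) (hZ : SplitsNoBlock G Z) : SplitsNoBlock G (Y ∪ Z) := by
  intro B hB
  rcases hY B hB with hBY | hBY
  · exact Or.inl (hBY.trans Finset.subset_union_left)
  · rcases hZ B hB with hBZ | hBZ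
    · exact Or.inl (hBZ.trans Finset.subset_union_right)
    · exact Or.inr (Finset.disjoint_union_right.2 ⟨hBY, hBZ⟩)

end SplitsNoBlock

section Restriction

variable {G U : Clus β} {Y Z : Finset β}

lemma mem_restr_self (hT : IsTree G) (hYG : Y ⊆ grd G) (hY : Y.Nonempty) : Y ∈ restr G Y :=
  mem_restr.2 ⟨hY.ne_empty, grd G, hT.grd_mem, Finset.inter_eq_right.2 hYG⟩

lemma mem_restr_of_mem {C : Finset β} (hC : C ∈ G) (hCY : C ⊆ Y) (hne : C.Nonempty) :
    C ∈ restr G Y :=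
  mem_restr.2 ⟨hne.ne_empty, C, hC, Finset.inter_eq_left.2 hCY⟩

lemma subset_of_mem_restr {C : Finset β} (hC : C ∈ restr G Y) : C ⊆ Y := by
  obtain ⟨-, D, -, rfl⟩ := mem_restr.1 hC
  exact Finset.inter_subset_right

lemma subset_grd_of_mem_restr {C : Finset β} (hC : C ∈ restr U Y) :
    C ⊆ grd U := by
  obtain ⟨-, E, hE, rfl⟩ := mem_restr.1 hC
  exact Finset.inter_subset_left.trans (subset_grd hE)

lemma inter_mem_restr {C : Finset β} (hC : C ∈ restr U Y) (hZY : Z ⊆ Y)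
    (hne : (C ∩ Z).Nonempty) : C ∩ Z ∈ restr U Z := by
  obtain ⟨-, D, hD, rfl⟩ := mem_restr.1 hC
  refine mem_restr.2 ⟨hne.ne_empty, D, hD, ?_⟩
  rw [Finset.inter_assoc, Finset.inter_eq_right.2 hZY]

lemma mem_restr_of_subset {C : Finset β} (hC : C ∈ restr U Y) (hCZ : C ⊆ Z) (hZY : Z ⊆ Y) :
    C ∈ restr U Z := by
  have hne : (C ∩ Z).Nonempty := by
    rw [Finset.inter_eq_left.2 hCZ]
    exact Finset.nonempty_iff_ne_empty.2 (mem_restr.1 hC).1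
  simpa [Finset.inter_eq_left.2 hCZ] using inter_mem_restr hC hZY hne

lemma grd_restr (hT : IsTree G) (hYG : Y ⊆ grd G) (hY : Y.Nonempty) : grd (restr G Y) = Y := by
  refine Finset.Subset.antisymm (fun x hx => ?_) (subset_grd (mem_restr_self hT hYG hY))
  obtain ⟨C, hC, hxC⟩ := mem_grd.1 hx
  exact subset_of_mem_restr hC hxC

lemma isBlock_restr (hT : IsTree G) {B : Finset β} (hB : IsBlock G B) (hBY : B ⊆ Y) :
    IsBlock (restr G Y) B := by
  refine ⟨mem_restr_of_mem hB.1 hBY (hT.nonempty hB.1), fun Q hQ hQB => ?_⟩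
  obtain ⟨hQne, E, hE, rfl⟩ := mem_restr.1 hQ
  have hEB : (E ∩ B).Nonempty := (Finset.nonempty_iff_ne_empty.2 hQne).mono
    (Finset.subset_inter Finset.inter_subset_left hQB)
  rcases hT.subset_or_subset hE hB.1 hEB with h | h
  · rw [hB.2 E hE h, Finset.inter_eq_left.2 hBY]
  · exact hQB.antisymm (Finset.subset_inter h hBY)

lemma isBlock_restr_iff (hT : IsTree G) (hY : SplitsNoBlock G Y) {B : Finset β} :
    IsBlock (restr G Y) B ↔ IsBlock G B ∧ B ⊆ Y := by
  refine ⟨fun hB => ?_, fun h => isBlock_restr hT h.1 h.2⟩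
  obtain ⟨hBne, E, hE, rfl⟩ := mem_restr.1 hB.1
  obtain ⟨x, hx⟩ := Finset.nonempty_iff_ne_empty.2 hBne
  obtain ⟨hxE, hxY⟩ := Finset.mem_inter.1 hx
  obtain ⟨B0, hB0, hxB0, hB0E⟩ := hT.exists_block_subset hE hxE
  have hB0Y : B0 ⊆ Y := (hY B0 hB0).resolve_right
    (Finset.not_disjoint_iff.2 ⟨x, hxB0, hxY⟩)
  rw [← hB.2 B0 (isBlock_restr hT hB0 hB0Y).1 (Finset.subset_inter hB0E hB0Y)]
  exact ⟨hB0, hB0Y⟩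

lemma restr_isTree (hT : IsTree G) (hYG : Y ⊆ grd G) (hY : Y.Nonempty)
    (hsplit : SplitsNoBlock G Y) : IsTree (restr G Y) := by
  refine ⟨⟨Y, mem_restr_self hT hYG hY⟩, fun C hC => ?_, fun C hC D hD => ?_, ?_, fun x hx => ?_⟩
  · exact Finset.nonempty_iff_ne_empty.2 (mem_restr.1 hC).1
  · obtain ⟨-, E, hE, rfl⟩ := mem_restr.1 hC
    obtain ⟨-, E', hE', rfl⟩ := mem_restr.1 hD
    rcases hT.laminar hE hE' with h | h | h
    · exact Or.inl (Finset.inter_subset_inter_right h)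
    · exact Or.inr (Or.inl (Finset.inter_subset_inter_right h))
    · exact Or.inr (Or.inr (h.mono Finset.inter_subset_left Finset.inter_subset_left))
  · rw [grd_restr hT hYG hY]
    exact mem_restr_self hT hYG hY
  · rw [grd_restr hT hYG hY] at hx
    obtain ⟨B, hB, hxB⟩ := hT.exists_block (hYG hx)
    have hBY : B ⊆ Y := (hsplit B hB).resolve_right (Finset.not_disjoint_iff.2 ⟨x, hxB, hx⟩)
    exact ⟨B, isBlock_restr hT hB hBY, hxB⟩

def InternalsIn (U G : Clus β) : Prop :=
  ∀ P ∈ G, ¬ IsBlock G P → P ∈ restr U (grd G)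

lemma InternalsIn.inter_mem (hG : InternalsIn U G) {A P : Finset β} (hP : IsChild G A P)
    (hYG : Y ⊆ grd G) (hne : (P ∩ Y).Nonempty) : P ∩ Y ∈ restr U Y :=
  inter_mem_restr (hG P hP.2.1 hP.not_isBlock) hYG hne

lemma InternalsIn.restr (hT : IsTree G) (hYG : Y ⊆ grd G) (hY : Y.Nonempty)
    (hsplit : SplitsNoBlock G Y) (hG : InternalsIn U G) : InternalsIn U (restr G Y) := by
  intro P hP hnb
  obtain ⟨hPne, C, hC, rfl⟩ := mem_restr.1 hP
  rw [grd_restr hT hYG hY]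
  refine inter_mem_restr (hG C hC fun hCB => hnb ?_) hYG (Finset.nonempty_iff_ne_empty.2 hPne)
  have hCY : C ⊆ Y := (hsplit C hCB).resolve_right fun h =>
    hPne (Finset.disjoint_iff_inter_eq_empty.1 h)
  rw [Finset.inter_eq_left.2 hCY]
  exact isBlock_restr hT hCB hCY

lemma IsTree.restr_block (hT : IsTree G) {A : Finset β} (hA : IsBlock G A) :
    restr G A = {A} := by
  refine Finset.eq_singleton_iff_unique_mem.2
    ⟨mem_restr_of_mem hA.1 subset_rfl (hT.nonempty hA.1), fun Q hQ => ?_⟩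
  obtain ⟨hQne, E, hE, rfl⟩ := mem_restr.1 hQ
  have hAE : A ⊆ E := hT.block_subset hA hE (by
    rw [Finset.inter_comm]; exact Finset.nonempty_iff_ne_empty.2 hQne)
  exact Finset.inter_eq_right.2 hAE

end Restriction

/-! ### Contracting a cherry -/

section Contraction

variable {G : Clus β} {A C P : Finset β}

lemma mem_conCh {E : Finset β} :
    E ∈ conCh G A C ↔ E = A ∪ C ∨ (E ∈ G ∧ E ≠ A ∧ E ≠ C) := by
  rw [conCh, Finset.mem_insert, Finset.mem_erase, Finset.mem_erase]
  tauto

lemma grd_conCh (hA : A ∈ G) (hC : C ∈ G) : grd (conCh G A C) = grd G := by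
  refine Finset.Subset.antisymm (fun x hx => ?_) (fun x hx => ?_)
  · obtain ⟨E, hE, hxE⟩ := mem_grd.1 hx
    rcases mem_conCh.1 hE with rfl | ⟨hEG, -⟩
    · exact Finset.union_subset (subset_grd hA) (subset_grd hC) hxE
    · exact subset_grd hEG hxE
  · obtain ⟨E, hE, hxE⟩ := mem_grd.1 hx
    by_cases hEAC : E = A ∨ E = C
    · refine mem_grd.2 ⟨A ∪ C, mem_conCh.2 (Or.inl rfl), ?_⟩
      rcases hEAC with rfl | rfl
      · exact Finset.mem_union_left _ hxE
      · exact Finset.mem_union_right _ hxE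
    · rw [not_or] at hEAC
      exact mem_grd.2 ⟨E, mem_conCh.2 (Or.inr ⟨hE, hEAC⟩), hxE⟩

variable (hT : IsTree G) (hA : IsBlock G A) (hC : IsBlock G C)
  (hPA : IsChild G A P) (hPC : IsChild G C P)
include hT hA hPA hPC

lemma union_subset_of_meets_cherry {E : Finset β} (hE : E ∈ G) (hEA : E ≠ A)
    (h : (A ∩ E).Nonempty) : A ∪ C ⊆ E := by
  have hAE : A ⊆ E := hT.block_subset hA hE h
  obtain ⟨x, hx⟩ := hT.nonempty hA.1
  rcases hT.subset_or_subset hPA.2.1 hE ⟨x, Finset.mem_inter.2 ⟨hPA.2.2.1.1 hx, hAE hx⟩⟩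
    with hPE | hEP
  · exact Finset.union_subset hAE (hPC.2.2.1.1.trans hPE)
  · rcases hEP.eq_or_ssubset with rfl | hEP
    · exact Finset.union_subset hPA.2.2.1.1 hPC.2.2.1.1
    · exact absurd (hPA.2.2.2 E hE hAE hEP) hEA

include hC

lemma union_subset_or_disjoint {E : Finset β} (hE : E ∈ G) (hEA : E ≠ A) (hEC : E ≠ C) :
    A ∪ C ⊆ E ∨ Disjoint (A ∪ C) E := by
  by_cases hAE : (A ∩ E).Nonempty
  · exact Or.inl (union_subset_of_meets_cherry hT hA hPA hPC hE hEA hAE)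
  by_cases hCE : (C ∩ E).Nonempty
  · rw [Finset.union_comm]
    exact Or.inl (union_subset_of_meets_cherry hT hC hPC hPA hE hEC hCE)
  rw [Finset.not_nonempty_iff_eq_empty, ← Finset.disjoint_iff_inter_eq_empty] at hAE hCE
  exact Or.inr (Finset.disjoint_union_left.2 ⟨hAE, hCE⟩)

lemma isBlock_conCh_union : IsBlock (conCh G A C) (A ∪ C) := by
  refine ⟨mem_conCh.2 (Or.inl rfl), fun E hE hEsub => ?_⟩
  rcases mem_conCh.1 hE with rfl | ⟨hEG, hEA, hEC⟩
  · rfl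
  rcases union_subset_or_disjoint hT hA hC hPA hPC hEG hEA hEC with h | h
  · exact hEsub.antisymm h
  · obtain ⟨x, hx⟩ := hT.nonempty hEG
    exact absurd (hEsub hx) (Finset.disjoint_right.1 h hx)

lemma isBlock_conCh_iff (hne : A ≠ C) {B : Finset β} :
    IsBlock (conCh G A C) B ↔ B = A ∪ C ∨ (IsBlock G B ∧ B ≠ A ∧ B ≠ C) := by
  constructor
  · intro hB
    rcases mem_conCh.1 hB.1 with rfl | ⟨hBG, hBA, hBC⟩
    · exact Or.inl rfl
    rcases union_subset_or_disjoint hT hA hC hPA hPC hBG hBA hBC with h | h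
    · exact Or.inl (hB.2 _ (mem_conCh.2 (Or.inl rfl)) h).symm
    refine Or.inr ⟨⟨hBG, fun E hE hEB => ?_⟩, hBA, hBC⟩
    by_cases hEAC : E = A ∨ E = C
    · obtain ⟨x, hx⟩ := hT.nonempty hE
      have hxAC : x ∈ A ∪ C := by
        rcases hEAC with rfl | rfl
        · exact Finset.mem_union_left _ hx
        · exact Finset.mem_union_right _ hx
      exact absurd (hEB hx) (Finset.disjoint_left.1 h hxAC)
    · rw [not_or] at hEAC
      exact hB.2 E (mem_conCh.2 (Or.inr ⟨hE, hEAC⟩)) hEB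
  · rintro (rfl | ⟨hB, hBA, hBC⟩)
    · exact isBlock_conCh_union hT hA hC hPA hPC
    refine ⟨mem_conCh.2 (Or.inr ⟨hB.1, hBA, hBC⟩), fun E hE hEB => ?_⟩
    rcases mem_conCh.1 hE with rfl | ⟨hEG, -⟩
    · exact absurd (hB.2 A hA.1 (Finset.union_subset_left hEB)).symm hBA
    · exact hB.2 E hEG hEB

lemma exists_isBlock_conCh_superset (hne : A ≠ C) {B : Finset β} (hB : IsBlock G B) :
    ∃ B', IsBlock (conCh G A C) B' ∧ B ⊆ B' := by
  by_cases hBAC : B = A ∨ B = C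
  · refine ⟨A ∪ C, isBlock_conCh_union hT hA hC hPA hPC, ?_⟩
    rcases hBAC with rfl | rfl
    · exact Finset.subset_union_left
    · exact Finset.subset_union_right
  · rw [not_or] at hBAC
    exact ⟨B, (isBlock_conCh_iff hT hA hC hPA hPC hne).2 (Or.inr ⟨hB, hBAC⟩), subset_rfl⟩

lemma conCh_isTree (hne : A ≠ C) : IsTree (conCh G A C) := by
  have hgrd := grd_conCh (G := G) hA.1 hC.1
  refine ⟨⟨A ∪ C, mem_conCh.2 (Or.inl rfl)⟩, fun E hE => ?_, fun E hE D hD => ?_, ?_,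
    fun x hx => ?_⟩
  · rcases mem_conCh.1 hE with rfl | ⟨hEG, -⟩
    · exact (hT.nonempty hA.1).mono Finset.subset_union_left
    · exact hT.nonempty hEG
  · rcases mem_conCh.1 hE with rfl | ⟨hEG, hEA, hEC⟩ <;>
      rcases mem_conCh.1 hD with rfl | ⟨hDG, hDA, hDC⟩
    · exact Or.inl subset_rfl
    · exact (union_subset_or_disjoint hT hA hC hPA hPC hDG hDA hDC).imp id Or.inr
    · exact (union_subset_or_disjoint hT hA hC hPA hPC hEG hEA hEC).elim
        (fun h => Or.inr (Or.inl h)) (fun h => Or.inr (Or.inr h.symm))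
    · exact hT.laminar hEG hDG
  · rw [hgrd, mem_conCh]
    by_cases hg : grd G = A ∪ C
    · exact Or.inl hg
    · exact Or.inr ⟨hT.grd_mem, fun h => hPA.2.2.1.2 (h ▸ subset_grd hPA.2.1),
        fun h => hPC.2.2.1.2 (h ▸ subset_grd hPC.2.1)⟩
  · rw [hgrd] at hx
    obtain ⟨B, hB, hxB⟩ := hT.exists_block hx
    obtain ⟨B', hB', hBB'⟩ := exists_isBlock_conCh_superset hT hA hC hPA hPC hne hB
    exact ⟨B', hB', hBB' hxB⟩

lemma InternalsIn.conCh {U : Clus β} (hne : A ≠ C) (hG : InternalsIn U G) :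
    InternalsIn U (conCh G A C) := by
  intro Q hQ hnb
  rw [grd_conCh hA.1 hC.1]
  rcases mem_conCh.1 hQ with rfl | ⟨hQG, hQA, hQC⟩
  · exact absurd (isBlock_conCh_union hT hA hC hPA hPC) hnb
  · exact hG Q hQG fun hb =>
      hnb ((isBlock_conCh_iff hT hA hC hPA hPC hne).2 (Or.inr ⟨hb, hQA, hQC⟩))

end Contraction

/-! ### Augmented trees -/

section Augment

variable {G T : Clus β} {ρ : β}

omit [DecidableEq β] in
lemma isBlock_singleton_of_nonempty (hne : ∀ C ∈ G, C.Nonempty) {x : β} (hx : {x} ∈ G) :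
    IsBlock G {x} :=
  ⟨hx, fun E hE hEx => (Finset.Nonempty.subset_singleton_iff (hne E hE)).1 hEx⟩

lemma isBlock_iff_of_singletons (hne : ∀ C ∈ G, C.Nonempty)
    (hsing : ∀ x ∈ grd G, {x} ∈ G) {B : Finset β} :
    IsBlock G B ↔ ∃ x ∈ grd G, B = {x} := by
  refine ⟨fun hB => ?_, fun ⟨x, hx, hBx⟩ => hBx ▸ isBlock_singleton_of_nonempty hne (hsing x hx)⟩
  obtain ⟨x, hx⟩ := hne B hB.1
  have hxg : x ∈ grd G := subset_grd hB.1 hx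
  exact ⟨x, hxg, (hB.2 {x} (hsing x hxg) (Finset.singleton_subset_iff.2 hx)).symm⟩

lemma mem_aug {E : Finset β} : E ∈ aug T ρ ↔ E = {ρ} ∨ E = insert ρ (grd T) ∨ E ∈ T := by
  rw [aug, Finset.mem_insert, Finset.mem_insert]

lemma subset_of_mem_aug {E : Finset β} (hE : E ∈ aug T ρ) : E ⊆ insert ρ (grd T) := by
  rcases mem_aug.1 hE with rfl | rfl | hE
  · exact Finset.singleton_subset_iff.2 (Finset.mem_insert_self _ _)
  · exact subset_rfl
  · exact (subset_grd hE).trans (Finset.subset_insert _ _)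

lemma grd_aug : grd (aug T ρ) = insert ρ (grd T) :=
  Finset.Subset.antisymm (fun _ hx => by
    obtain ⟨E, hE, hxE⟩ := mem_grd.1 hx
    exact subset_of_mem_aug hE hxE) (subset_grd (mem_aug.2 (Or.inr (Or.inl rfl))))

lemma nonempty_of_mem_aug (hT : IsTree T) {E : Finset β} (hE : E ∈ aug T ρ) : E.Nonempty := by
  rcases mem_aug.1 hE with rfl | rfl | hE
  · exact Finset.singleton_nonempty ρ
  · exact Finset.insert_nonempty _ _
  · exact hT.nonempty hE

lemma aug_isTree (hT : IsTree T) (hρ : ρ ∉ grd T) : IsTree (aug T ρ) := by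
  have hdisj : ∀ E ∈ T, Disjoint {ρ} E := fun E hE =>
    Finset.disjoint_singleton_left.2 fun h => hρ (subset_grd hE h)
  refine ⟨⟨{ρ}, mem_aug.2 (Or.inl rfl)⟩, fun E hE => nonempty_of_mem_aug hT hE,
    fun E hE D hD => ?_, ?_, fun x hx => ?_⟩
  · rcases mem_aug.1 hE with rfl | rfl | hET
    · rcases mem_aug.1 hD with rfl | rfl | hDT
      · exact Or.inl subset_rfl
      · exact Or.inl (subset_of_mem_aug hE)
      · exact Or.inr (Or.inr (hdisj D hDT))
    · exact Or.inr (Or.inl (subset_of_mem_aug hD))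
    · rcases mem_aug.1 hD with rfl | rfl | hDT
      · exact Or.inr (Or.inr (hdisj E hET).symm)
      · exact Or.inl (subset_of_mem_aug hE)
      · exact hT.laminar hET hDT
  · rw [grd_aug]
    exact mem_aug.2 (Or.inr (Or.inl rfl))
  · rw [grd_aug, Finset.mem_insert] at hx
    rcases hx with rfl | hx
    · exact ⟨{x}, isBlock_singleton_of_nonempty (fun E hE => nonempty_of_mem_aug hT hE)
        (mem_aug.2 (Or.inl rfl)), Finset.mem_singleton_self x⟩
    obtain ⟨B, hB, hxB⟩ := hT.exists_block hx
    refine ⟨B, ⟨mem_aug.2 (Or.inr (Or.inr hB.1)), fun E hE hEB => ?_⟩, hxB⟩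
    rcases mem_aug.1 hE with rfl | rfl | hET
    · exact absurd (subset_grd hB.1 (hEB (Finset.mem_singleton_self ρ))) hρ
    · exact absurd (subset_grd hB.1 (hEB (Finset.mem_insert_self ρ _))) hρ
    · exact hB.2 E hET hEB

end Augment

lemma IsPhylo.isBlock_aug_iff {X : Finset β} {T : Clus β} {ρ : β} (h : IsPhylo X T)
    {B : Finset β} : IsBlock (aug T ρ) B ↔ ∃ x ∈ insert ρ X, B = {x} := by
  rw [isBlock_iff_of_singletons (fun E hE => nonempty_of_mem_aug h.1 hE), grd_aug, h.2.1]
  intro x hx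
  rw [grd_aug, h.2.1, Finset.mem_insert] at hx
  rcases hx with rfl | hx
  · exact mem_aug.2 (Or.inl rfl)
  · exact mem_aug.2 (Or.inr (Or.inr (h.2.2 x hx)))

/-! ### The path between the leaves of a cherry and its pendant subtrees -/

section Pendant

variable {G : Clus β} {A C D L : Finset β}

omit [DecidableEq β] in
lemma lca_unique {S L' : Finset β} (h : IsLca G S L) (h' : IsLca G S L') : L = L' :=
  (h.2.2 L' h'.1 h'.2.1).antisymm (h'.2.2 L h.1 h.2.1)

omit [DecidableEq β] in
lemma IsMaxSub.notMem_iff {X E : Finset β} (h : IsMaxSub G X D E) {x : β} :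
    x ∉ E ↔ ∀ E' ∈ G, E' ⊂ D → X ⊆ E' → x ∉ E' :=
  ⟨fun hx E' hE' hE'D hXE' hxE' => hx (h.2.2.2 E' hE' hXE' hE'D hxE'),
    fun h' => h' E h.1 h.2.2.1 h.2.1⟩

lemma IsTree.exists_isMaxSub (hT : IsTree G) {X : Finset β} (hX : X ∈ G)
    (hXD : X ⊂ D) : ∃ E, IsMaxSub G X D E := by
  obtain ⟨E, hE, hmax⟩ := (G.filter (fun E => X ⊆ E ∧ E ⊂ D)).exists_maximal
    ⟨X, Finset.mem_filter.2 ⟨hX, subset_rfl, hXD⟩⟩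
  obtain ⟨hEG, hXE, hED⟩ := Finset.mem_filter.1 hE
  refine ⟨E, hEG, hXE, hED, fun E' hE' hXE' hE'D => ?_⟩
  obtain ⟨x, hx⟩ := hT.nonempty hX
  rcases hT.subset_or_subset hE' hEG ⟨x, Finset.mem_inter.2 ⟨hXE' hx, hXE hx⟩⟩ with h | h
  · exact h
  · exact hmax (Finset.mem_filter.2 ⟨hE', hXE', hE'D⟩) h

/-- The taxa of the grouped pendant subtree of `F[A ∼ C]` hanging off the path node `D`. -/
noncomputable def pendSet (G : Clus β) (A C D : Finset β) : Finset β :=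
  D.filter fun x => ∀ E ∈ G, E ⊂ D → A ⊆ E ∨ C ⊆ E → x ∉ E

lemma PathNode.subset_or (hD : PathNode G A C D) : A ⊆ D ∨ C ⊆ D := by
  rcases hD.2.2.2 with h | h | h
  · exact Or.inl h.1
  · exact Or.inr h.1
  · exact Or.inl (Finset.union_subset_left h.2.1)

lemma PendGround.eq_pendSet {P : Finset β} (h : PendGround G A C D P) :
    P = pendSet G A C D := by
  have hss : ∀ {X E : Finset β}, ¬ X ⊆ D → E ⊂ D → ¬ X ⊆ E := fun hX hE hXE =>
    hX (hXE.trans hE.subset)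
  ext x
  simp only [pendSet, Finset.mem_filter, or_imp, forall_and]
  rcases h.2 with ⟨-, hCD, E, hE, rfl⟩ | ⟨-, hAD, E, hE, rfl⟩ | ⟨-, E1, E2, hE1, hE2, rfl⟩
  · rw [Finset.mem_sdiff, hE.notMem_iff]
    exact and_congr_right fun _ =>
      (and_iff_left fun E' _ hE' hCE' => absurd hCE' (hss hCD hE')).symm
  · rw [Finset.mem_sdiff, hE.notMem_iff]
    exact and_congr_right fun _ =>
      (and_iff_right fun E' _ hE' hAE' => absurd hAE' (hss hAD hE')).symm
  · rw [Finset.mem_sdiff, Finset.mem_union, not_or, hE1.notMem_iff, hE2.notMem_iff]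

lemma subset_pendSet (hT : IsTree G) {E : Finset β} (hE : E ∈ G) (hED : E ⊂ D)
    (hmeet : (E ∩ pendSet G A C D).Nonempty) : E ⊆ pendSet G A C D := by
  obtain ⟨x, hx⟩ := hmeet
  obtain ⟨hxE, hxP⟩ := Finset.mem_inter.1 hx
  refine fun y hy => Finset.mem_filter.2 ⟨hED.subset hy, fun E' hE' hE'D hAC hyE' => ?_⟩
  rcases hT.subset_or_subset hE hE' ⟨y, Finset.mem_inter.2 ⟨hy, hyE'⟩⟩ with h | h
  · exact (Finset.mem_filter.1 hxP).2 E' hE' hE'D hAC (h hxE)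
  · exact (Finset.mem_filter.1 hxP).2 E hE hED (hAC.imp h.trans' h.trans') hxE

lemma restr_pendSet (hT : IsTree G) (hDG : D ∈ G) (hP : (pendSet G A C D).Nonempty) :
    restr G (pendSet G A C D) = pendComp G (pendSet G A C D) := by
  set P := pendSet G A C D
  have hPD : P ⊆ D := Finset.filter_subset _ _
  ext Q
  rw [pendComp, below, Finset.mem_insert, Finset.mem_filter, mem_restr]
  constructor
  · rintro ⟨hQne, E, hE, rfl⟩
    obtain ⟨x, hx⟩ := Finset.nonempty_iff_ne_empty.2 hQne
    obtain ⟨hxE, hxP⟩ := Finset.mem_inter.1 hx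
    rcases hT.subset_or_subset hE hDG ⟨x, Finset.mem_inter.2 ⟨hxE, hPD hxP⟩⟩ with hED | hDE
    · rcases hED.eq_or_ssubset with rfl | hED
      · exact Or.inl (Finset.inter_eq_right.2 hPD)
      · have hEP := subset_pendSet hT hE hED ⟨x, hx⟩
        exact Or.inr (by rw [Finset.inter_eq_left.2 hEP]; exact ⟨hE, hEP⟩)
    · exact Or.inl (Finset.inter_eq_right.2 (hPD.trans hDE))
  · rintro (rfl | ⟨hQG, hQP⟩)
    · exact ⟨hP.ne_empty, D, hDG, Finset.inter_eq_right.2 hPD⟩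
    · exact ⟨(hT.nonempty hQG).ne_empty, Q, hQG, Finset.inter_eq_left.2 hQP⟩

lemma PathNode.eq_of_pendSet_inter (hT : IsTree G) {D' : Finset β} (hD : PathNode G A C D)
    (hD' : PathNode G A C D') (h : (pendSet G A C D ∩ pendSet G A C D').Nonempty) : D = D' := by
  obtain ⟨x, hx⟩ := h
  obtain ⟨⟨hxD, hxP⟩, ⟨hxD', hxP'⟩⟩ :=
    (Finset.mem_inter.1 hx).imp Finset.mem_filter.1 Finset.mem_filter.1
  rcases hT.subset_or_subset hD.1 hD'.1 ⟨x, Finset.mem_inter.2 ⟨hxD, hxD'⟩⟩ with h | h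
  · by_contra hne
    exact hxP' D hD.1 (h.ssubset_of_ne hne) hD.subset_or hxD
  · by_contra hne
    exact hxP D' hD'.1 (h.ssubset_of_ne (Ne.symm hne)) hD'.subset_or hxD'

lemma PathNode.ssubset_of_isBlock (hD : PathNode G A C D) (hA : IsBlock G A) (hC : IsBlock G C)
    {B : Finset β} (hB : IsBlock G B) (hBD : B ⊆ D) : B ⊂ D := by
  refine hBD.ssubset_of_ne fun hBD => ?_
  subst hBD
  rcases hD.subset_or with h | h
  · exact hD.2.1 (hB.2 A hA.1 h).symm
  · exact hD.2.2.1 (hB.2 C hC.1 h).symm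

lemma PathNode.splitsNoBlock_pendSet (hT : IsTree G) (hD : PathNode G A C D) (hA : IsBlock G A)
    (hC : IsBlock G C) : SplitsNoBlock G (pendSet G A C D) := by
  intro B hB
  by_cases hmeet : (B ∩ pendSet G A C D).Nonempty
  · have hBD : B ⊆ D := hT.block_subset hB hD.1 (hmeet.mono
      (Finset.inter_subset_inter_left (Finset.filter_subset _ _)))
    exact Or.inl (subset_pendSet hT hB.1 (hD.ssubset_of_isBlock hA hC hB hBD) hmeet)
  · exact Or.inr (Finset.disjoint_iff_inter_eq_empty.2 (Finset.not_nonempty_iff_eq_empty.1 hmeet))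

lemma PathNode.exists_pendGround (hT : IsTree G) (hD : PathNode G A C D) (hA : IsBlock G A)
    (hC : IsBlock G C) : ∃ P, PendGround G A C D P := by
  rcases hD.2.2.2 with ⟨hAD, hCD⟩ | ⟨hCD, hAD⟩ | hlca
  · obtain ⟨E, hE⟩ := hT.exists_isMaxSub hA.1 (hD.ssubset_of_isBlock hA hC hA hAD)
    exact ⟨_, hD, Or.inl ⟨hAD, hCD, E, hE, rfl⟩⟩
  · obtain ⟨E, hE⟩ := hT.exists_isMaxSub hC.1 (hD.ssubset_of_isBlock hA hC hC hCD)
    exact ⟨_, hD, Or.inr (Or.inl ⟨hCD, hAD, E, hE, rfl⟩)⟩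
  · obtain ⟨E1, hE1⟩ := hT.exists_isMaxSub hA.1
      (hD.ssubset_of_isBlock hA hC hA (Finset.union_subset_left hlca.2.1))
    obtain ⟨E2, hE2⟩ := hT.exists_isMaxSub hC.1
      (hD.ssubset_of_isBlock hA hC hC (Finset.union_subset_right hlca.2.1))
    exact ⟨_, hD, Or.inr (Or.inr ⟨hlca, E1, E2, hE1, hE2, rfl⟩)⟩

lemma ne_lca_left (hT : IsTree G) (hA : IsBlock G A) (hC : IsBlock G C) (hne : A ≠ C)
    (hL : IsLca G (A ∪ C) L) : A ≠ L := by
  rintro rfl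
  obtain ⟨x, hx⟩ := hT.nonempty hC.1
  exact Finset.disjoint_left.1 (hT.disjoint_blocks hA hC hne)
    (Finset.union_subset_right hL.2.1 hx) hx

lemma pathNode_lca (hT : IsTree G) (hA : IsBlock G A) (hC : IsBlock G C) (hne : A ≠ C)
    (hL : IsLca G (A ∪ C) L) : PathNode G A C L :=
  ⟨hL.1, (ne_lca_left hT hA hC hne hL).symm,
    (ne_lca_left hT hC hA hne.symm (Finset.union_comm A C ▸ hL)).symm, Or.inr (Or.inr hL)⟩

lemma pathNode_of_ssubset (hL : IsLca G (A ∪ C) L) {E : Finset β} (hE : E ∈ G) (hEA : E ≠ A)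
    (hEC : E ≠ C) (hAC : A ⊆ E ∨ C ⊆ E) (hEL : E ⊂ L) : PathNode G A C E := by
  refine ⟨hE, hEA, hEC, ?_⟩
  by_cases hAE : A ⊆ E <;> by_cases hCE : C ⊆ E
  · exact absurd (hL.2.2 E hE (Finset.union_subset hAE hCE)) hEL.not_subset
  · exact Or.inl ⟨hAE, hCE⟩
  · exact Or.inr (Or.inl ⟨hCE, hAE⟩)
  · exact absurd hAC (by tauto)

lemma PathNode.subset_lca (hT : IsTree G) (hD : PathNode G A C D) (hA : IsBlock G A)
    (hC : IsBlock G C) (hL : IsLca G (A ∪ C) L) : D ⊆ L := by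
  have key : ∀ {X Y : Finset β}, IsBlock G X → X ⊆ D → X ⊆ L → ¬ Y ⊆ D → Y ⊆ L → D ⊆ L :=
    fun {X Y} hX hXD hXL hYD hYL => by
      obtain ⟨x, hx⟩ := hT.nonempty hX.1
      exact (hT.subset_or_subset hD.1 hL.1 ⟨x, Finset.mem_inter.2 ⟨hXD hx, hXL hx⟩⟩).resolve_right
        fun hLD => hYD (hYL.trans hLD)
  have hAL := Finset.union_subset_left hL.2.1
  have hCL := Finset.union_subset_right hL.2.1
  rcases hD.2.2.2 with ⟨hAD, hCD⟩ | ⟨hCD, hAD⟩ | hlca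
  · exact key hA hAD hAL hCD hCL
  · exact key hC hCD hCL hAD hAL
  · exact (lca_unique hlca hL).le

lemma PathNode.pendSet_subset (hT : IsTree G) (hD : PathNode G A C D) (hA : IsBlock G A)
    (hC : IsBlock G C) (hL : IsLca G (A ∪ C) L) : pendSet G A C D ⊆ L \ (A ∪ C) := by
  intro x hx
  obtain ⟨hxD, hxP⟩ := Finset.mem_filter.1 hx
  have hnot : ∀ {X}, IsBlock G X → (A ⊆ X ∨ C ⊆ X) → x ∉ X := fun {X} hX hACX hxX =>
    hxP X hX.1 (hD.ssubset_of_isBlock hA hC hX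
      (hT.block_subset hX hD.1 ⟨x, Finset.mem_inter.2 ⟨hxX, hxD⟩⟩)) hACX hxX
  refine Finset.mem_sdiff.2 ⟨hD.subset_lca hT hA hC hL hxD, fun hxAC => ?_⟩
  rcases Finset.mem_union.1 hxAC with hxA | hxC
  · exact hnot hA (Or.inl subset_rfl) hxA
  · exact hnot hC (Or.inr subset_rfl) hxC

lemma exists_pathNode_subset_pendSet (hT : IsTree G) (hA : IsBlock G A) (hC : IsBlock G C)
    (hne : A ≠ C) (hL : IsLca G (A ∪ C) L) {B : Finset β} (hB : IsBlock G B)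
    (hBL : B ⊆ L \ (A ∪ C)) : ∃ D, PathNode G A C D ∧ B ⊆ pendSet G A C D := by
  -- the lowest path node above `B`
  obtain ⟨D, hD, hmin⟩ := (G.filter fun D => PathNode G A C D ∧ B ⊆ D).exists_minimal
    ⟨L, Finset.mem_filter.2 ⟨hL.1, pathNode_lca hT hA hC hne hL,
      hBL.trans Finset.sdiff_subset⟩⟩
  obtain ⟨-, hDpath, hBD⟩ := Finset.mem_filter.1 hD
  obtain ⟨b, hb⟩ := hT.nonempty hB.1
  have hbAC := (Finset.mem_sdiff.1 (hBL hb)).2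
  refine ⟨D, hDpath, fun y hy => Finset.mem_filter.2 ⟨hBD hy, fun E hE hED hAC hyE => ?_⟩⟩
  have hBE : B ⊆ E := hT.block_subset hB hE ⟨y, Finset.mem_inter.2 ⟨hy, hyE⟩⟩
  have hEpath : PathNode G A C E := pathNode_of_ssubset hL hE
    (fun h => hbAC (Finset.mem_union_left _ (h ▸ hBE hb)))
    (fun h => hbAC (Finset.mem_union_right _ (h ▸ hBE hb)))
    hAC (hED.trans_subset (hDpath.subset_lca hT hA hC hL))
  exact hED.not_subset (hmin (Finset.mem_filter.2 ⟨hE, hEpath, hBE⟩) hED.subset)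

lemma exists_pendGround_superset (hT : IsTree G) (hA : IsBlock G A) (hC : IsBlock G C)
    (hne : A ≠ C) (hL : IsLca G (A ∪ C) L) {B : Finset β} (hB : IsBlock G B)
    (hBL : B ⊆ L \ (A ∪ C)) : ∃ D P, PendGround G A C D P ∧ B ⊆ P := by
  obtain ⟨D, hD, hBD⟩ := exists_pathNode_subset_pendSet hT hA hC hne hL hB hBL
  obtain ⟨P, hDP⟩ := hD.exists_pendGround hT hA hC
  exact ⟨D, P, hDP, hDP.eq_pendSet ▸ hBD⟩

end Pendant

section PathComponent

variable {G : Clus β} {A C L : Finset β}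

lemma acComp_eq_restr : acComp G A C L = restr G (grd G \ (L \ (A ∪ C))) := by
  rw [acComp, restr]
  congr 1
  refine Finset.image_congr fun D hD => ?_
  rw [← Finset.inter_sdiff_assoc, Finset.inter_eq_left.2 (subset_grd hD)]

lemma splitsNoBlock_acGround (hT : IsTree G) (hA : A ∈ G) (hC : C ∈ G) (hL : L ∈ G) :
    SplitsNoBlock G (grd G \ (L \ (A ∪ C))) :=
  (SplitsNoBlock.of_mem hT hT.grd_mem).sdiff
    ((SplitsNoBlock.of_mem hT hL).sdiff ((SplitsNoBlock.of_mem hT hA).union (.of_mem hT hC)))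

lemma subset_acGround (hA : A ∈ G) : A ⊆ grd G \ (L \ (A ∪ C)) := fun _ hx =>
  Finset.mem_sdiff.2
    ⟨subset_grd hA hx, fun h => (Finset.mem_sdiff.1 h).2 (Finset.mem_union_left _ hx)⟩

lemma inter_acGround_of_isChild (hT : IsTree G) (hA : IsBlock G A) (hC : IsBlock G C)
    (hne : A ≠ C) (hL : IsLca G (A ∪ C) L) {PA : Finset β} (hPA : IsChild G A PA)
    (hPAL : PA ≠ L) : PA ∩ (grd G \ (L \ (A ∪ C))) = A := by
  have hAL : A ⊆ L := Finset.union_subset_left hL.2.1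
  obtain ⟨a, ha⟩ := hT.nonempty hA.1
  have hPAsub : PA ⊆ L := (hT.subset_or_subset hPA.2.1 hL.1
      ⟨a, Finset.mem_inter.2 ⟨hPA.2.2.1.1 ha, hAL ha⟩⟩).resolve_right fun hLPA =>
    ne_lca_left hT hA hC hne hL (hPA.2.2.2 L hL.1 hAL (hLPA.ssubset_of_ne (Ne.symm hPAL))).symm
  have hCPA : Disjoint C PA := by
    refine Finset.disjoint_iff_inter_eq_empty.2 (Finset.not_nonempty_iff_eq_empty.1 fun h => ?_)
    exact hPAL (hPAsub.antisymm
      (hL.2.2 PA hPA.2.1 (Finset.union_subset hPA.2.2.1.1 (hT.block_subset hC hPA.2.1 h))))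
  ext x
  simp only [Finset.mem_inter, Finset.mem_sdiff, Finset.mem_union, not_and_or, not_not]
  refine ⟨fun h => ?_, fun hx => ⟨hPA.2.2.1.1 hx, subset_grd hA.1 hx, Or.inr (Or.inl hx)⟩⟩
  rcases h.2.2 with hxL | hxA | hxC
  · exact absurd (hPAsub h.1) hxL
  · exact hxA
  · exact absurd h.1 (Finset.disjoint_left.1 hCPA hxC)

end PathComponent

/-! ### Cutting a component into pieces -/

section Replace

variable {F F' : List (Clus β)} {G H : Clus β} {new : List (Clus β)}

omit [DecidableEq β] in
lemma ReplaceIn.mem (h : ReplaceIn F F' G new) : G ∈ F := by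
  obtain ⟨l1, l2, rfl, -⟩ := h
  simp

omit [DecidableEq β] in
lemma ReplaceIn.mem_of_mem_new (h : ReplaceIn F F' G new) (hH : H ∈ new) : H ∈ F' := by
  obtain ⟨l1, l2, -, rfl⟩ := h
  simp [hH]

omit [DecidableEq β] in
lemma ReplaceIn.eq_or_mem (h : ReplaceIn F F' G new) (hH : H ∈ F) : H = G ∨ H ∈ F' := by
  obtain ⟨l1, l2, rfl, rfl⟩ := h
  simp only [List.mem_append, List.mem_cons] at hH ⊢
  tauto

lemma ReplaceIn.mem_new_or_disjoint (h : ReplaceIn F F' G new)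
    (hF : F.Pairwise fun G H => Disjoint (grd G) (grd H)) (hH : H ∈ F') :
    H ∈ new ∨ (H ∈ F ∧ Disjoint (grd H) (grd G)) := by
  obtain ⟨l1, l2, rfl, rfl⟩ := h
  rw [List.pairwise_append, List.pairwise_cons] at hF
  simp only [List.mem_append, List.mem_cons] at hH ⊢
  rcases hH with (hH | hH) | hH
  · exact Or.inr ⟨Or.inl hH, hF.2.2 H hH G (List.mem_cons_self ..)⟩
  · exact Or.inl hH
  · exact Or.inr ⟨Or.inr (Or.inr hH), (hF.2.1.1 H hH).symm⟩

lemma ReplaceIn.pairwise_disjoint (h : ReplaceIn F F' G new)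
    (hF : F.Pairwise fun G H => Disjoint (grd G) (grd H))
    (hnew : new.Pairwise fun G H => Disjoint (grd G) (grd H))
    (hsub : ∀ H ∈ new, grd H ⊆ grd G) : F'.Pairwise fun G H => Disjoint (grd G) (grd H) := by
  obtain ⟨l1, l2, rfl, rfl⟩ := h
  rw [List.pairwise_append, List.pairwise_cons] at hF
  obtain ⟨h1, ⟨hG2, h2⟩, h12⟩ := hF
  refine List.pairwise_append.2 ⟨List.pairwise_append.2 ⟨h1, hnew, fun a ha b hb =>
    Finset.disjoint_of_subset_right (hsub b hb) (h12 a ha G (List.mem_cons_self ..))⟩, h2, ?_⟩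
  intro a ha b hb
  rcases List.mem_append.1 ha with ha | ha
  · exact h12 a ha b (List.mem_cons_of_mem _ hb)
  · exact Finset.disjoint_of_subset_left (hsub a ha) (hG2 b hb)

lemma disjoint_grd_of_pairwise {F : List (Clus β)}
    (hF : F.Pairwise fun G H => Disjoint (grd G) (grd H)) {G H : Clus β} (hG : G ∈ F)
    (hH : H ∈ F) (hne : G ≠ H) : Disjoint (grd G) (grd H) :=
  haveI : Std.Symm fun G H : Clus β => Disjoint (grd G) (grd H) := ⟨fun _ _ h => h.symm⟩
  hF.forall hG hH hne

lemma ReplaceIn.forall_mem {F F' : List (Clus β)} {G : Clus β} {new : List (Clus β)}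
    (h : ReplaceIn F F' G new) (hF : F.Pairwise fun G H => Disjoint (grd G) (grd H))
    {p : Clus β → Prop} (hold : ∀ H ∈ F, Disjoint (grd H) (grd G) → p H)
    (hnew : ∀ H ∈ new, p H) : ∀ H ∈ F', p H := fun H hH =>
  (h.mem_new_or_disjoint hF hH).elim (hnew H) fun h => hold H h.1 h.2

lemma mem_foldr_grd {F : List (Clus β)} {x : β} :
    x ∈ F.foldr (fun G s => grd G ∪ s) ∅ ↔ ∃ G ∈ F, x ∈ grd G := by
  induction F with
  | nil => simp
  | cons G F ih => simp [ih]

end Replace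

def IsSplitting (G : Clus β) (new : List (Clus β)) : Prop :=
  (∀ H ∈ new, ∃ Y ⊆ grd G, Y.Nonempty ∧ SplitsNoBlock G Y ∧ H = restr G Y) ∧
  new.Pairwise (fun H H' => Disjoint (grd H) (grd H')) ∧
  ∀ B, IsBlock G B → ∃ H ∈ new, B ⊆ grd H

section Splitting

variable {G : Clus β} {A C : Finset β}

lemma isSplitting_cut (hT : IsTree G) (hA : IsBlock G A) (hGA : G ≠ {A}) :
    IsSplitting G [{A}, restr G (grd G \ A)] := by
  have hY := hT.sdiff_block_nonempty hA hGA
  have hsplit : SplitsNoBlock G (grd G \ A) :=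
    (SplitsNoBlock.of_mem hT hT.grd_mem).sdiff (.of_mem hT hA.1)
  have hgrd := grd_restr hT Finset.sdiff_subset hY
  refine ⟨fun H hH => ?_, ?_, fun B hB => ?_⟩
  · rcases List.mem_pair.1 hH with rfl | rfl
    · exact ⟨A, subset_grd hA.1, hT.nonempty hA.1, .of_mem hT hA.1, (hT.restr_block hA).symm⟩
    · exact ⟨_, Finset.sdiff_subset, hY, hsplit, rfl⟩
  · simpa [hgrd, grd_singleton] using Finset.disjoint_sdiff
  · by_cases hBA : B = A
    · exact ⟨{A}, List.mem_cons_self .., by rw [grd_singleton, hBA]⟩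
    · refine ⟨_, List.mem_pair.2 (Or.inr rfl), ?_⟩
      rw [hgrd]
      exact Finset.subset_sdiff.2 ⟨subset_grd hB.1, hT.disjoint_blocks hB hA hBA⟩

lemma PendGround.pendComp_eq_restr (hT : IsTree G) {D P : Finset β} (h : PendGround G A C D P)
    (hP : P.Nonempty) : pendComp G P = restr G P := by
  obtain rfl := h.eq_pendSet
  exact (restr_pendSet hT h.1.1 hP).symm

lemma pairwise_disjoint_of_pendSet (hT : IsTree G) {pend : List (Clus β)}
    (hpend : ∀ Q ∈ pend, ∃ D, PathNode G A C D ∧ (pendSet G A C D).Nonempty ∧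
      Q = restr G (pendSet G A C D)) (hnd : pend.Nodup) :
    pend.Pairwise fun H H' => Disjoint (grd H) (grd H') := by
  have hPG : ∀ {D}, PathNode G A C D → pendSet G A C D ⊆ grd G := fun hD =>
    (Finset.filter_subset _ _).trans (subset_grd hD.1)
  refine hnd.imp_of_mem fun {Q Q'} hQ hQ' hQQ' => ?_
  obtain ⟨D, hD, hP, rfl⟩ := hpend Q hQ
  obtain ⟨D', hD', hP', rfl⟩ := hpend Q' hQ'
  rw [grd_restr hT (hPG hD) hP, grd_restr hT (hPG hD') hP']
  refine Finset.disjoint_iff_inter_eq_empty.2 (Finset.not_nonempty_iff_eq_empty.1 fun hi => ?_)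
  exact hQQ' (by rw [hD.eq_of_pendSet_inter hT hD' hi])

lemma isSplitting_cutPend (hT : IsTree G) (hA : IsBlock G A) (hC : IsBlock G C) (hne : A ≠ C)
    {new : List (Clus β)} (h : CutPend G A C new) : IsSplitting G new := by
  obtain ⟨L, hL, pend, hmem, hall, hnd, rfl⟩ := h
  have hpend : ∀ Q ∈ pend, ∃ D, PathNode G A C D ∧ (pendSet G A C D).Nonempty ∧
      Q = restr G (pendSet G A C D) := fun Q hQ => by
    obtain ⟨D, P, hDP, hP, rfl⟩ := hmem Q hQ
    obtain rfl := hDP.eq_pendSet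
    exact ⟨D, hDP.1, hP, hDP.pendComp_eq_restr hT hP⟩
  have hY : (grd G \ (L \ (A ∪ C))).Nonempty := (hT.nonempty hA.1).mono (subset_acGround hA.1)
  have hgrdY := grd_restr hT Finset.sdiff_subset hY
  have hPG : ∀ {D}, PathNode G A C D → pendSet G A C D ⊆ grd G := fun hD =>
    (Finset.filter_subset _ _).trans (subset_grd hD.1)
  refine ⟨fun H hH => ?_, List.pairwise_cons.2 ⟨fun Q hQ => ?_,
    pairwise_disjoint_of_pendSet hT hpend hnd⟩, fun B hB => ?_⟩
  · rcases List.mem_cons.1 hH with rfl | hH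
    · exact ⟨_, Finset.sdiff_subset, hY, splitsNoBlock_acGround hT hA.1 hC.1 hL.1,
        acComp_eq_restr⟩
    · obtain ⟨D, hD, hP, rfl⟩ := hpend H hH
      exact ⟨_, hPG hD, hP, hD.splitsNoBlock_pendSet hT hA hC, rfl⟩
  · obtain ⟨D, hD, hP, rfl⟩ := hpend Q hQ
    rw [acComp_eq_restr, hgrdY, grd_restr hT (hPG hD) hP]
    exact Finset.disjoint_of_subset_right (hD.pendSet_subset hT hA hC hL)
      Finset.sdiff_disjoint
  · rcases (SplitsNoBlock.of_mem hT hL.1).sdiff ((SplitsNoBlock.of_mem hT hA.1).union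
      (.of_mem hT hC.1)) B hB with hBL | hBL
    · obtain ⟨D, P, hDP, hBP⟩ := exists_pendGround_superset hT hA hC hne hL hB hBL
      have hP : P.Nonempty := (hT.nonempty hB.1).mono hBP
      refine ⟨_, List.mem_cons_of_mem _ (hall D P hDP hP), ?_⟩
      rw [hDP.pendComp_eq_restr hT hP, grd_restr hT (hDP.eq_pendSet ▸ hPG hDP.1) hP]
      exact hBP
    · refine ⟨_, List.mem_cons_self .., ?_⟩
      rw [acComp_eq_restr, hgrdY]
      exact Finset.subset_sdiff.2 ⟨subset_grd hB.1, hBL⟩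

end Splitting

/-! ### The run invariant -/

section Maps

variable {M : MapT β} {A S X1 X2 : Finset β} {b : Bool} {c : Prop}

def IsSplit (A X1 X2 : Finset β) : Prop :=
  X1 ∪ X2 = A ∧ Disjoint X1 X2 ∧ X1.Nonempty ∧ X2.Nonempty

lemma IsSplit.left_ssubset (hsplit : IsSplit A X1 X2) : X1 ⊂ A := by
  refine hsplit.1 ▸ Finset.subset_union_left.ssubset_of_ne fun h => ?_
  obtain ⟨x, hx⟩ := hsplit.2.2.2
  exact Finset.disjoint_right.1 hsplit.2.1 hx (h ▸ Finset.mem_union_right _ hx)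

lemma IsSplit.symm (hsplit : IsSplit A X1 X2) : IsSplit A X2 X1 :=
  ⟨Finset.union_comm X2 X1 ▸ hsplit.1, hsplit.2.1.symm, hsplit.2.2.2, hsplit.2.2.1⟩

def EntriesSplit (M : MapT β) : Prop :=
  ∀ A X1 X2 b, M A = some (X1, X2, b) → IsSplit A X1 X2

lemma remapBot_eq_remapIf : remapBot M A = remapIf True A M := by
  funext S
  simp [remapBot, remapIf]

lemma remapIf_eq_some (h : remapIf c A M S = some (X1, X2, b)) :
    ∃ b', M S = some (X1, X2, b') := by
  unfold remapIf at h
  split_ifs at h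
  · obtain ⟨⟨X1', X2', b'⟩, hM, hp⟩ := Option.map_eq_some_iff.1 h
    simp only [Prod.mk.injEq] at hp
    obtain ⟨rfl, rfl, -⟩ := hp
    exact ⟨b', hM⟩
  · exact ⟨b, h⟩

lemma remapIf_eq_some_false (h : remapIf c A M S = some (X1, X2, false)) :
    (S = A ∧ c) ∨ M S = some (X1, X2, false) := by
  unfold remapIf at h
  split_ifs at h with hc
  · exact Or.inl hc
  · exact Or.inr h

lemma EntriesSplit.remapIf (hM : EntriesSplit M) : EntriesSplit (remapIf c A M) :=
  fun _ _ _ _ h => (remapIf_eq_some h).elim fun _ h' => hM _ _ _ _ h'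

end Maps

def InputCluster (U1 U2 G : Clus β) (A : Finset β) : Prop :=
  A ∈ restr U1 (grd G) ∨ A ∈ restr U2 (grd G)

lemma InputCluster.mono {U1 U2 G H : Clus β} {A : Finset β} (h : InputCluster U1 U2 G A)
    (hAH : A ⊆ grd H) (hHG : grd H ⊆ grd G) : InputCluster U1 U2 H A :=
  h.imp (mem_restr_of_subset · hAH hHG) (mem_restr_of_subset · hAH hHG)

def InputClusterInLeaf (U1 U2 : Clus β) (F : List (Clus β)) (A : Finset β) : Prop :=
  ∃ G ∈ F, ∃ B, IsBlock G B ∧ A ⊆ B ∧ InputCluster U1 U2 G A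

structure RunInv (U1 U2 R : Clus β) (F : List (Clus β)) (M : MapT β) : Prop where
  tree_R : IsTree R
  grd_R : grd R ⊆ grd U1
  internals_R : InternalsIn U1 R
  tree_F : ∀ G ∈ F, IsTree G
  internals_F : ∀ G ∈ F, InternalsIn U2 G
  disjoint_F : F.Pairwise fun G H => Disjoint (grd G) (grd H)
  blocks_F : ∀ G ∈ F, (∃ A, G = {A}) ∨ ∀ B, IsBlock G B → IsBlock R B
  split_M : EntriesSplit M
  bot_M : ∀ A X1 X2, M A = some (X1, X2, false) → InputClusterInLeaf U1 U2 F A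

namespace RunInv

variable {U1 U2 R : Clus β} {F F' : List (Clus β)} {M : MapT β} {A C : Finset β}

lemma remapIf (hs : RunInv U1 U2 R F M) {c : Prop}
    (hA : c → InputClusterInLeaf U1 U2 F A) : RunInv U1 U2 R F (remapIf c A M) :=
  { hs with
    split_M := hs.split_M.remapIf
    bot_M := fun S X1 X2 h => (remapIf_eq_some_false h).elim
      (fun ⟨hSA, hc⟩ => hSA ▸ hA hc) (hs.bot_M S X1 X2) }

lemma update (hs : RunInv U1 U2 R F M) {X1 X2 : Finset β} {b : Bool}
    (hsplit : IsSplit A X1 X2)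
    (hb : b = false → InputClusterInLeaf U1 U2 F A) :
    RunInv U1 U2 R F (Function.update M A (some (X1, X2, b))) := by
  refine { hs with split_M := fun S Y1 Y2 b' h => ?_, bot_M := fun S Y1 Y2 h => ?_ }
  · by_cases hSA : S = A
    · subst hSA
      simp only [Function.update_self, Option.some.injEq, Prod.mk.injEq] at h
      obtain ⟨rfl, rfl, -⟩ := h
      exact hsplit
    · exact hs.split_M S Y1 Y2 b' (by rwa [Function.update_of_ne hSA] at h)
  · by_cases hSA : S = A
    · subst hSA
      simp only [Function.update_self, Option.some.injEq, Prod.mk.injEq] at h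
      exact hb h.2.2
    · exact hs.bot_M S Y1 Y2 (by rwa [Function.update_of_ne hSA] at h)

lemma replace (hs : RunInv U1 U2 R F M) {G : Clus β} {new : List (Clus β)}
    (hrep : ReplaceIn F F' G new) (hsplit : IsSplitting G new)
    (hbl : ∀ B, IsBlock G B → IsBlock R B) : RunInv U1 U2 R F' M := by
  have hG := hrep.mem
  have hT := hs.tree_F G hG
  have piece : ∀ H ∈ new, ∃ Y ⊆ grd G, Y.Nonempty ∧ SplitsNoBlock G Y ∧ H = restr G Y ∧
      grd H = Y := fun H hH => by
    obtain ⟨Y, hYG, hY, hYs, rfl⟩ := hsplit.1 H hH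
    exact ⟨Y, hYG, hY, hYs, rfl, grd_restr hT hYG hY⟩
  have hF' : ∀ {p : Clus β → Prop}, (∀ H ∈ F, p H) → (∀ H ∈ new, p H) → ∀ H ∈ F', p H :=
    fun hF => hrep.forall_mem hs.disjoint_F fun H h _ => hF H h
  refine ⟨hs.tree_R, hs.grd_R, hs.internals_R, hF' hs.tree_F ?_, hF' hs.internals_F ?_, ?_,
    hF' hs.blocks_F ?_, hs.split_M, ?_⟩
  · intro H hH
    obtain ⟨Y, hYG, hY, hYs, rfl, -⟩ := piece H hH
    exact restr_isTree hT hYG hY hYs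
  · intro H hH
    obtain ⟨Y, hYG, hY, hYs, rfl, -⟩ := piece H hH
    exact (hs.internals_F G hG).restr hT hYG hY hYs
  · refine hrep.pairwise_disjoint hs.disjoint_F hsplit.2.1 fun H hH => ?_
    obtain ⟨Y, hYG, -, -, -, rfl⟩ := piece H hH
    exact hYG
  · intro H hH
    obtain ⟨Y, -, -, hYs, rfl, -⟩ := piece H hH
    exact Or.inr fun B hB => hbl B ((isBlock_restr_iff hT hYs).1 hB).1
  · intro A X1 X2 hAM
    obtain ⟨G0, hG0, B, hB, hAB, hin⟩ := hs.bot_M A X1 X2 hAM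
    rcases hrep.eq_or_mem hG0 with rfl | hG0'
    · obtain ⟨H, hH, hBH⟩ := hsplit.2.2 B hB
      obtain ⟨Y, hYG, -, hYs, rfl, hHY⟩ := piece H hH
      rw [hHY] at hBH
      refine ⟨_, hrep.mem_of_mem_new hH, B, (isBlock_restr_iff hT hYs).2 ⟨hB, hBH⟩, hAB, ?_⟩
      exact hin.mono (by rw [hHY]; exact hAB.trans hBH) (by rw [hHY]; exact hYG)
    · exact ⟨G0, hG0', B, hB, hAB, hin⟩

lemma isBlock_of_not_singleton (hs : RunInv U1 U2 R F M) {G : Clus β} (hG : G ∈ F)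
    (hA : IsBlock G A) (hGA : G ≠ {A}) : ∀ B, IsBlock G B → IsBlock R B :=
  (hs.blocks_F G hG).resolve_left fun ⟨D, hD⟩ => hGA (by
    subst hD
    rw [Finset.mem_singleton.1 hA.1])

lemma removeLeaf (hs : RunInv U1 U2 R F M) (hA : IsBlock R A) (hAF : {A} ∈ F)
    (hR : R ≠ {A}) : RunInv U1 U2 (rmBlock R A) F M := by
  have hT := hs.tree_R
  have hY := hT.sdiff_block_nonempty hA hR
  have hsplit : SplitsNoBlock R (grd R \ A) :=
    (SplitsNoBlock.of_mem hT hT.grd_mem).sdiff (.of_mem hT hA.1)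
  have hgrd : grd (rmBlock R A) = grd R \ A := grd_restr hT Finset.sdiff_subset hY
  refine ⟨restr_isTree hT Finset.sdiff_subset hY hsplit, hgrd ▸ Finset.sdiff_subset.trans hs.grd_R,
    hs.internals_R.restr hT Finset.sdiff_subset hY hsplit, hs.tree_F, hs.internals_F,
    hs.disjoint_F, fun G hG => ?_, hs.split_M, hs.bot_M⟩
  by_cases hGA : G = {A}
  · exact Or.inl ⟨A, hGA⟩
  refine (hs.blocks_F G hG).imp id fun hbl B hB => ?_
  have hdisj : Disjoint B A := by
    simpa [grd_singleton] using Finset.disjoint_of_subset_left (subset_grd hB.1)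
      (disjoint_grd_of_pairwise hs.disjoint_F hG hAF hGA)
  exact isBlock_restr hT (hbl B hB) (Finset.subset_sdiff.2 ⟨subset_grd (hbl B hB).1, hdisj⟩)

lemma isolApply (hU1 : grd U1 ∈ U1) {s t : St β} (hs : RunInv U1 U2 s.1 s.2.1 s.2.2)
    (hns : ¬ SingleLeaf s.1) (h : IsolApply s A t) : RunInv U1 U2 t.1 t.2.1 t.2.2 := by
  obtain ⟨⟨hA, hAF⟩, rfl⟩ := h
  rw [remapBot_eq_remapIf]
  refine (hs.removeLeaf hA hAF fun hR => hns ⟨A, hR⟩).remapIf fun _ => ?_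
  have hAU : A ⊆ grd U1 := (subset_grd hA.1).trans hs.grd_R
  refine ⟨{A}, hAF, A, isBlock_singleton, subset_rfl, Or.inl ?_⟩
  rw [grd_singleton]
  exact mem_restr.2 ⟨(hs.tree_R.nonempty hA.1).ne_empty, _, hU1, Finset.inter_eq_right.2 hAU⟩

lemma inputClusterInLeaf_of_inter_eq (hs : RunInv U1 U2 R F M) {G : Clus β} (hG : G ∈ F)
    {A' Q Y X : Finset β} (hQ : IsChild G A' Q) (hYG : Y ⊆ grd G) (hX : IsBlock G X)
    (hQY : Q ∩ Y = X) (hmem : restr G Y ∈ F') : InputClusterInLeaf U1 U2 F' X := by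
  have hT := hs.tree_F G hG
  have hXne := hT.nonempty hX.1
  have hXY : X ⊆ Y := hQY ▸ Finset.inter_subset_right
  refine ⟨_, hmem, X, isBlock_restr hT hX hXY, subset_rfl, Or.inr ?_⟩
  rw [grd_restr hT hYG (hXne.mono hXY), ← hQY]
  exact (hs.internals_F G hG).inter_mem hQ hYG (hQY ▸ hXne)

lemma cutApply {s t : St β} (hs : RunInv U1 U2 s.1 s.2.1 s.2.2)
    (hisol : ¬ ∃ A, IsolRef s.1 s.2.1 A) (h : CutApply s A C t) :
    RunInv U1 U2 t.1 t.2.1 t.2.2 := by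
  obtain ⟨⟨⟨-, P, hPA, -, hP⟩, -⟩, G, F', M', hG, hA, hrep, hupd, rfl⟩ := h
  have hT := hs.tree_F G hG
  have hGA : G ≠ {A} := fun hGA => hisol ⟨A, hP A hPA, hGA ▸ hG⟩
  have hs' := hs.replace hrep (isSplitting_cut hT hA hGA) (hs.isBlock_of_not_singleton hG hA hGA)
  rcases hupd with ⟨Q, D, hQA, hQD, hDA, hchildren, hD, rfl⟩ | ⟨-, rfl⟩
  · rw [remapBot_eq_remapIf]
    refine hs'.remapIf fun _ => hs.inputClusterInLeaf_of_inter_eq hG hQA Finset.sdiff_subset hD ?_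
      (hrep.mem_of_mem_new (List.mem_pair.2 (Or.inr rfl)))
    rw [hT.eq_union_of_isChild hQA hQD hchildren, Finset.union_inter_distrib_right,
      Finset.inter_sdiff_self, Finset.empty_union, Finset.inter_eq_left.2
        (Finset.subset_sdiff.2 ⟨subset_grd hD.1, hT.disjoint_blocks hD hA hDA⟩)]
  · exact hs'

lemma pendApply {s t : St β} (hs : RunInv U1 U2 s.1 s.2.1 s.2.2) (h : PendApply s A C t) :
    RunInv U1 U2 t.1 t.2.1 t.2.2 := by
  obtain ⟨⟨⟨hne, -⟩, -⟩, G, new, F', M', hG, hA, hC, hcut, hrep, ⟨PA, PC, L, hPA, hPC, hL, rfl⟩,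
    rfl⟩ := h
  have hT := hs.tree_F G hG
  have hGA : G ≠ {A} := fun hGA => hne ((Finset.mem_singleton.1 (hGA ▸ hC.1)).symm)
  have hs' := hs.replace hrep (isSplitting_cutPend hT hA hC hne hcut)
    (hs.isBlock_of_not_singleton hG hA hGA)
  obtain ⟨L', hL', _, -, -, -, hnew⟩ := hcut
  obtain rfl := lca_unique hL' hL
  have hmem := hrep.mem_of_mem_new (hnew ▸ List.mem_cons_self ..)
  rw [acComp_eq_restr] at hmem
  refine (hs'.remapIf fun hPCL => ?_).remapIf fun hPAL =>
    hs.inputClusterInLeaf_of_inter_eq hG hPA Finset.sdiff_subset hA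
      (inter_acGround_of_isChild hT hA hC hne hL hPA hPAL) hmem
  rw [Finset.union_comm] at hL hmem
  exact hs.inputClusterInLeaf_of_inter_eq hG hPC Finset.sdiff_subset hC
    (inter_acGround_of_isChild hT hC hA hne.symm hL hPC hPCL) hmem

lemma contract (hs : RunInv U1 U2 R F M) {G : Clus β} (hrep : ReplaceIn F F' G [conCh G A C])
    (hne : A ≠ C) (hRA : IsBlock R A) (hRC : IsBlock R C) {P : Finset β} (hPA : IsChild R A P)
    (hPC : IsChild R C P) (hGA : IsBlock G A) (hGC : IsBlock G C) {Q : Finset β}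
    (hQA : IsChild G A Q) (hQC : IsChild G C Q) : RunInv U1 U2 (conCh R A C) F' M := by
  have hG := hrep.mem
  have hTR := hs.tree_R
  have hTG := hs.tree_F G hG
  have hGA' : G ≠ {A} := fun h => hne (Finset.mem_singleton.1 (h ▸ hGC.1)).symm
  have hbl := hs.isBlock_of_not_singleton hG hGA hGA'
  have hblock : ∀ B, IsBlock R B → B ≠ A → B ≠ C → IsBlock (conCh R A C) B :=
    fun B hB hBA hBC => (isBlock_conCh_iff hTR hRA hRC hPA hPC hne).2 (Or.inr ⟨hB, hBA, hBC⟩)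
  have hnewG : ∀ H ∈ [conCh G A C], H = conCh G A C := fun _ => List.mem_singleton.1
  have hgrd := grd_conCh (G := G) hGA.1 hGC.1
  refine ⟨conCh_isTree hTR hRA hRC hPA hPC hne, grd_conCh hRA.1 hRC.1 ▸ hs.grd_R,
    hs.internals_R.conCh hTR hRA hRC hPA hPC hne,
    hrep.forall_mem hs.disjoint_F (fun H h _ => hs.tree_F H h)
      fun H hH => hnewG H hH ▸ conCh_isTree hTG hGA hGC hQA hQC hne,
    hrep.forall_mem hs.disjoint_F (fun H h _ => hs.internals_F H h)
      fun H hH => hnewG H hH ▸ (hs.internals_F G hG).conCh hTG hGA hGC hQA hQC hne,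
    hrep.pairwise_disjoint hs.disjoint_F (List.pairwise_singleton _ _)
      fun H hH => hnewG H hH ▸ hgrd.le,
    hrep.forall_mem hs.disjoint_F (fun H hH hHG => ?_) fun H hH => ?_, hs.split_M,
    fun A' X1 X2 hA' => ?_⟩
  · have hne' : ∀ {X}, X ∈ G → ∀ B, IsBlock H B → B ≠ X := fun hX B hB hBX => by
      obtain ⟨x, hx⟩ := (hs.tree_F H hH).nonempty hB.1
      exact Finset.disjoint_left.1 hHG (subset_grd hB.1 hx) (subset_grd hX (hBX ▸ hx))
    exact (hs.blocks_F H hH).imp id fun hHR B hB =>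
      hblock B (hHR B hB) (hne' hGA.1 B hB) (hne' hGC.1 B hB)
  · rw [hnewG H hH]
    refine Or.inr fun B hB => ?_
    rcases (isBlock_conCh_iff hTG hGA hGC hQA hQC hne).1 hB with rfl | ⟨hB, hBA, hBC⟩
    · exact isBlock_conCh_union hTR hRA hRC hPA hPC
    · exact hblock B (hbl B hB) hBA hBC
  · obtain ⟨G0, hG0, B, hB, hAB, hin⟩ := hs.bot_M A' X1 X2 hA'
    rcases hrep.eq_or_mem hG0 with rfl | hG0'
    · obtain ⟨B', hB', hBB'⟩ := exists_isBlock_conCh_superset hTG hGA hGC hQA hQC hne hB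
      exact ⟨_, hrep.mem_of_mem_new (List.mem_singleton_self _), B', hB', hAB.trans hBB',
        by rwa [InputCluster, hgrd]⟩
    · exact ⟨G0, hG0', B, hB, hAB, hin⟩

lemma conApply {s t : St β} (hs : RunInv U1 U2 s.1 s.2.1 s.2.2) (h : ConApply s A C t) :
    RunInv U1 U2 t.1 t.2.1 t.2.2 := by
  obtain ⟨⟨⟨hne, P, hPA, hPC, hP⟩, -⟩, G, F', hG, ⟨-, hGA, hGC, Q, hQA, hQC⟩, hrep, PR, PG,
    hPRA, hPGA, b, hb, rfl⟩ := h
  have hTR := hs.tree_R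
  have hTG := hs.tree_F G hG
  obtain rfl := hTR.isChild_unique hPA hPRA
  obtain rfl := hTG.isChild_unique hQA hPGA
  have hRA := hP A hPA
  have hRC := hP C hPC
  refine (hs.contract hrep hne hRA hRC hPA hPC hGA hGC hQA hQC).update
    ⟨rfl, hTG.disjoint_blocks hGA hGC hne, hTG.nonempty hGA.1, hTG.nonempty hGC.1⟩ fun hbf => ?_
  have hdeg : ¬ (Deg3 s.1 P ∧ Deg3 G Q) := by simpa [hbf] using hb.symm
  refine ⟨_, hrep.mem_of_mem_new (List.mem_singleton_self _), A ∪ C,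
    isBlock_conCh_union hTG hGA hGC hQA hQC, subset_rfl, ?_⟩
  rw [InputCluster, grd_conCh hGA.1 hGC.1]
  by_cases hdR : Deg3 s.1 P
  · rw [← hTG.eq_union_of_not_deg3 hQA hQC hne fun hdG => hdeg ⟨hdR, hdG⟩]
    exact Or.inr (hs.internals_F G hG Q hQA.2.1 hQA.not_isBlock)
  · have hGR : grd G ⊆ grd s.1 := hTG.grd_subset_of_blocks
      (hs.isBlock_of_not_singleton hG hGA fun h => hne (Finset.mem_singleton.1 (h ▸ hGC.1)).symm)
    have hmem := hs.internals_R P hPA.2.1 hPA.not_isBlock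
    rw [hTR.eq_union_of_not_deg3 hPA hPC hne hdR] at hmem
    exact Or.inl (mem_restr_of_subset hmem
      (Finset.union_subset (subset_grd hGA.1) (subset_grd hGC.1)) hGR)

lemma step (hU1 : grd U1 ∈ U1) {k : ℕ} {s t : St β} (hs : RunInv U1 U2 s.1 s.2.1 s.2.2)
    (h : AMFStep k s t) : RunInv U1 U2 t.1 t.2.1 t.2.2 := by
  obtain ⟨-, hns, ⟨A, hisol⟩ | ⟨-, A, C, hcon⟩ | ⟨hisol, -, A, C, hcut | hpend⟩⟩ := h
  · exact hs.isolApply hU1 hns hisol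
  · exact hs.conApply hcon
  · exact hs.cutApply hisol hcut
  · exact hs.pendApply hpend

end RunInv

lemma runInv_init {X : Finset β} {ρ : β} (hρ : ρ ∉ X) {T1 T2 : Clus β} (h1 : IsPhylo X T1)
    (h2 : IsPhylo X T2) :
    RunInv (aug T1 ρ) (aug T2 ρ) (aug T1 ρ) [aug T2 ρ] fun _ => none := by
  have hT1 := aug_isTree h1.1 (h1.2.1 ▸ hρ)
  have hT2 := aug_isTree h2.1 (h2.2.1 ▸ hρ)
  have hint : ∀ {U : Clus β}, IsTree U → InternalsIn U U := fun hU P hP _ =>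
    mem_restr_of_mem hP (subset_grd hP) (hU.nonempty hP)
  refine ⟨hT1, subset_rfl, hint hT1, fun G hG => ?_, fun G hG => ?_, List.pairwise_singleton _ _,
    fun G hG => Or.inr fun B hB => ?_, fun _ _ _ _ h => (nomatch h), fun _ _ _ h => (nomatch h)⟩
  · rw [List.mem_singleton.1 hG]
    exact hT2
  · rw [List.mem_singleton.1 hG]
    exact hint hT2
  · rw [List.mem_singleton.1 hG, h2.isBlock_aug_iff] at hB
    exact h1.isBlock_aug_iff.2 hB

lemma runInv_of_run {X : Finset β} {ρ : β} (hρ : ρ ∉ X) {T1 T2 : Clus β} (h1 : IsPhylo X T1)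
    (h2 : IsPhylo X T2) {k : ℕ} {s : St β}
    (h : Relation.ReflTransGen (AMFStep k) (initSt T1 T2 ρ) s) :
    RunInv (aug T1 ρ) (aug T2 ρ) s.1 s.2.1 s.2.2 := by
  induction h with
  | refl => exact runInv_init hρ h1 h2
  | tail _ hstep ih => exact ih.step (aug_isTree h1.1 (h1.2.1 ▸ hρ)).grd_mem hstep

/-! ### The final expansion -/

section Expansion

-- `G0` is `G` when the leaf `A` is expanded with `⊥`, and `G.erase A` when with `⊤`.
variable {G G0 : Clus β} {A X1 X2 : Finset β} (hA : IsBlock G A) (hsplit : IsSplit A X1 X2)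
  (hG0 : G0 ⊆ G)
include hA hsplit hG0

lemma isBlock_expand_left : IsBlock (insert X1 (insert X2 G0)) X1 := by
  refine ⟨Finset.mem_insert_self _ _, fun E hE hEX => ?_⟩
  rcases Finset.mem_insert.1 hE with rfl | hE
  · rfl
  rcases Finset.mem_insert.1 hE with rfl | hE
  · obtain ⟨x, hx⟩ := hsplit.2.2.2
    exact absurd (hEX hx) (Finset.disjoint_right.1 hsplit.2.1 hx)
  · have hEA := hA.2 E (hG0 hE) (hEX.trans hsplit.left_ssubset.subset)
    exact absurd (hEA ▸ hEX) hsplit.left_ssubset.not_subset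

lemma isBlock_expand_iff (hG0' : G.erase A ⊆ G0)
    (hbd : ∀ B B', IsBlock G B → IsBlock G B' → B ≠ B' → Disjoint B B') {B : Finset β} :
    IsBlock (insert X1 (insert X2 G0)) B ↔ B = X1 ∨ B = X2 ∨ (IsBlock G B ∧ B ≠ A) := by
  have hX1 := isBlock_expand_left hA hsplit hG0
  have hX2 : IsBlock (insert X1 (insert X2 G0)) X2 := by
    rw [Finset.insert_comm]
    exact isBlock_expand_left hA hsplit.symm hG0
  have hX1A := hsplit.left_ssubset
  constructor
  · intro hB
    rcases Finset.mem_insert.1 hB.1 with rfl | hBG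
    · exact Or.inl rfl
    rcases Finset.mem_insert.1 hBG with rfl | hBG
    · exact Or.inr (Or.inl rfl)
    have hBA : B ≠ A := by
      rintro rfl
      exact hX1A.ne (hB.2 X1 hX1.1 hX1A.subset)
    refine Or.inr (Or.inr ⟨⟨hG0 hBG, fun E hE hEB => ?_⟩, hBA⟩)
    by_cases hEA : E = A
    · subst hEA
      exact absurd (hB.2 X1 hX1.1 (hX1A.subset.trans hEB) ▸ hEB) hX1A.not_subset
    · exact hB.2 E (Finset.mem_insert_of_mem (Finset.mem_insert_of_mem
        (hG0' (Finset.mem_erase.2 ⟨hEA, hE⟩)))) hEB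
  · rintro (rfl | rfl | ⟨hB, hBA⟩)
    · exact hX1
    · exact hX2
    have hdisj := hbd B A hB hA hBA
    refine ⟨Finset.mem_insert_of_mem (Finset.mem_insert_of_mem
      (hG0' (Finset.mem_erase.2 ⟨hBA, hB.1⟩))), fun E hE hEB => ?_⟩
    have hEA : ∀ {X}, X ⊆ A → X.Nonempty → ¬ X ⊆ B := fun hXA ⟨x, hx⟩ hXB =>
      Finset.disjoint_left.1 hdisj (hXB hx) (hXA hx)
    rcases Finset.mem_insert.1 hE with rfl | hE
    · exact absurd hEB (hEA hX1A.subset hsplit.2.2.1)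
    rcases Finset.mem_insert.1 hE with rfl | hE
    · exact absurd hEB (hEA (hsplit.1 ▸ Finset.subset_union_right) hsplit.2.2.2)
    · exact hB.2 E (hG0 hE) hEB

lemma grd_expand (hG0' : G.erase A ⊆ G0) : grd (insert X1 (insert X2 G0)) = grd G := by
  refine Finset.Subset.antisymm (fun x hx => ?_) (fun x hx => ?_)
  · obtain ⟨E, hE, hxE⟩ := mem_grd.1 hx
    rcases Finset.mem_insert.1 hE with rfl | hE
    · exact subset_grd hA.1 (hsplit.left_ssubset.subset hxE)
    rcases Finset.mem_insert.1 hE with rfl | hE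
    · exact subset_grd hA.1 (hsplit.symm.left_ssubset.subset hxE)
    · exact subset_grd (hG0 hE) hxE
  · obtain ⟨E, hE, hxE⟩ := mem_grd.1 hx
    by_cases hEA : E = A
    · rw [hEA, ← hsplit.1, Finset.mem_union] at hxE
      rcases hxE with hx1 | hx2
      · exact subset_grd (Finset.mem_insert_self _ _) hx1
      · exact subset_grd (Finset.mem_insert_of_mem (Finset.mem_insert_self _ _)) hx2
    · exact subset_grd (Finset.mem_insert_of_mem (Finset.mem_insert_of_mem
        (hG0' (Finset.mem_erase.2 ⟨hEA, hE⟩)))) hxE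

lemma disjoint_blocks_expand (hG0' : G.erase A ⊆ G0)
    (hbd : ∀ B B', IsBlock G B → IsBlock G B' → B ≠ B' → Disjoint B B') :
    ∀ B B', IsBlock (insert X1 (insert X2 G0)) B → IsBlock (insert X1 (insert X2 G0)) B' →
      B ≠ B' → Disjoint B B' := by
  have hiff := fun B => isBlock_expand_iff (B := B) hA hsplit hG0 hG0' hbd
  have hXB : ∀ {X}, X ⊆ A → ∀ B, IsBlock G B → B ≠ A → Disjoint X B := fun hXA B hB hBA =>
    Finset.disjoint_of_subset_left hXA (hbd A B hA hB hBA.symm)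
  have hX1A := hsplit.left_ssubset.subset
  have hX2A := hsplit.symm.left_ssubset.subset
  intro B B' hB hB' hne
  rcases (hiff B).1 hB with rfl | rfl | ⟨hBG, hBA⟩ <;>
    rcases (hiff B').1 hB' with rfl | rfl | ⟨hB'G, hB'A⟩
  all_goals first
    | exact absurd rfl hne
    | exact hsplit.2.1
    | exact hsplit.2.1.symm
    | exact hXB hX1A B' hB'G hB'A
    | exact hXB hX2A B' hB'G hB'A
    | exact (hXB hX1A B hBG hBA).symm
    | exact (hXB hX2A B hBG hBA).symm
    | exact hbd B B' hBG hB'G hne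

lemma not_isBlock_expand (hG0' : G.erase A ⊆ G0)
    (hbd : ∀ B B', IsBlock G B → IsBlock G B' → B ≠ B' → Disjoint B B') {C : Finset β}
    (hC : C ∈ insert X1 (insert X2 G0)) (hCnb : ¬ IsBlock (insert X1 (insert X2 G0)) C) :
    C = A ∨ (C ∈ G ∧ ¬ IsBlock G C) := by
  have hiff := fun B => isBlock_expand_iff (B := B) hA hsplit hG0 hG0' hbd
  rcases Finset.mem_insert.1 hC with rfl | hC
  · exact absurd ((hiff C).2 (Or.inl rfl)) hCnb
  rcases Finset.mem_insert.1 hC with rfl | hC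
  · exact absurd ((hiff C).2 (Or.inr (Or.inl rfl))) hCnb
  by_cases hCA : C = A
  · exact Or.inl hCA
  · exact Or.inr ⟨hG0 hC, fun hb => hCnb ((hiff C).2 (Or.inr (Or.inr ⟨hb, hCA⟩)))⟩

end Expansion

structure ExpansionInv (U1 U2 : Clus β) (M : MapT β) (F : List (Clus β)) : Prop where
  disjoint : F.Pairwise fun G H => Disjoint (grd G) (grd H)
  blocks_disjoint : ∀ G ∈ F, ∀ B B', IsBlock G B → IsBlock G B' → B ≠ B' → Disjoint B B'
  internal_bot : ∀ G ∈ F, ∀ C ∈ G, ¬ IsBlock G C → ∃ X1 X2, M C = some (X1, X2, false)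
  bot_input : ∀ A X1 X2, M A = some (X1, X2, false) → ∃ G ∈ F, InputCluster U1 U2 G A

lemma RunInv.expansionInv {U1 U2 R : Clus β} {F : List (Clus β)} {M : MapT β}
    (hs : RunInv U1 U2 R F M) (hR : SingleLeaf R) : ExpansionInv U1 U2 M F := by
  have hsing : ∀ G ∈ F, ∃ B, G = {B} := fun G hG => (hs.blocks_F G hG).elim id fun hbl => by
    obtain ⟨A0, rfl⟩ := hR
    have hT := hs.tree_F G hG
    obtain ⟨x, hx⟩ := hT.nonempty hT.grd_mem
    obtain ⟨B, hB, -⟩ := hT.exists_block hx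
    have hAll : ∀ B', IsBlock G B' → B' = A0 := fun B' hB' => Finset.mem_singleton.1 (hbl B' hB').1
    exact ⟨A0, hT.eq_singleton_of_forall_isBlock (hAll B hB ▸ hB) hAll⟩
  refine ⟨hs.disjoint_F, fun G hG _ _ => (hs.tree_F G hG).disjoint_blocks, fun G hG C hC hCnb => ?_,
    fun A X1 X2 hA => ?_⟩
  · obtain ⟨B, rfl⟩ := hsing G hG
    exact absurd (Finset.mem_singleton.1 hC ▸ isBlock_singleton) hCnb
  · obtain ⟨G, hG, -, -, -, hin⟩ := hs.bot_M A X1 X2 hA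
    exact ⟨G, hG, hin⟩

namespace ExpansionInv

variable {U1 U2 : Clus β} {M : MapT β} {F F' : List (Clus β)}

lemma expandStep (hM : EntriesSplit M) (hE : ExpansionInv U1 U2 M F) (h : ExpandStep M F F') :
    ExpansionInv U1 U2 M F' := by
  obtain ⟨G, A, X1, X2, b, hA, hMA, hrep⟩ := h
  have hG := hrep.mem
  have hsplit := hM A X1 X2 b hMA
  set G0 := if b then G.erase A else G
  have hN : (if b then insert X1 (insert X2 (G.erase A)) else insert X1 (insert X2 G)) =
      insert X1 (insert X2 G0) := by cases b <;> rfl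
  rw [hN] at hrep
  have hG0 : G0 ⊆ G := by cases b <;> simp [G0, Finset.erase_subset]
  have hG0' : G.erase A ⊆ G0 := by cases b <;> simp [G0, Finset.erase_subset]
  have hbd := hE.blocks_disjoint G hG
  have hgrd := grd_expand hA hsplit hG0 hG0'
  have hnew : ∀ H ∈ [insert X1 (insert X2 G0)], H = insert X1 (insert X2 G0) :=
    fun _ => List.mem_singleton.1
  refine ⟨hrep.pairwise_disjoint hE.disjoint (List.pairwise_singleton _ _)
      fun H hH => hnew H hH ▸ hgrd.le,
    hrep.forall_mem hE.disjoint (fun H hH _ => hE.blocks_disjoint H hH)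
      fun H hH => hnew H hH ▸ disjoint_blocks_expand hA hsplit hG0 hG0' hbd,
    hrep.forall_mem hE.disjoint (fun H hH _ => hE.internal_bot H hH) fun H hH C hC hCnb => ?_,
    fun C Y1 Y2 hC => ?_⟩
  · rw [hnew H hH] at hC hCnb
    rcases not_isBlock_expand hA hsplit hG0 hG0' hbd hC hCnb with rfl | ⟨hCG, hCnb⟩
    · cases b
      · exact ⟨X1, X2, hMA⟩
      · simp [G0, hsplit.left_ssubset.ne', hsplit.symm.left_ssubset.ne'] at hC
    · exact hE.internal_bot G hG C hCG hCnb
  · obtain ⟨G1, hG1, hin⟩ := hE.bot_input C Y1 Y2 hC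
    rcases hrep.eq_or_mem hG1 with rfl | hG1'
    · exact ⟨_, hrep.mem_of_mem_new (List.mem_singleton_self _), by rwa [InputCluster, hgrd]⟩
    · exact ⟨G1, hG1', hin⟩

lemma expands (hM : EntriesSplit M) (hE : ExpansionInv U1 U2 M F)
    (h : Relation.ReflTransGen (ExpandStep M) F F') : ExpansionInv U1 U2 M F' := by
  induction h with
  | refl => exact hE
  | tail _ hstep ih => exact ih.expandStep hM hstep

lemma inputCluster_of_not_isBlock (hE : ExpansionInv U1 U2 M F) {G : Clus β} (hG : G ∈ F)
    {C : Finset β} (hCG : C ∈ G) (hCnb : ¬ IsBlock G C) : InputCluster U1 U2 G C := by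
  obtain ⟨X1, X2, hMC⟩ := hE.internal_bot G hG C hCG hCnb
  obtain ⟨G1, hG1, hin⟩ := hE.bot_input C X1 X2 hMC
  obtain ⟨x, hx⟩ : C.Nonempty := by
    rcases hin with h | h <;> exact Finset.nonempty_iff_ne_empty.2 (mem_restr.1 h).1
  have hxG1 : x ∈ grd G1 := by rcases hin with h | h <;> exact subset_of_mem_restr h hx
  by_cases hG1G : G1 = G
  · exact hG1G ▸ hin
  · exact absurd (subset_grd hCG hx)
      (Finset.disjoint_left.1 (disjoint_grd_of_pairwise hE.disjoint hG1 hG hG1G) hxG1)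

lemma not_isAFρ_of_contractEdgeF (hE : ExpansionInv U1 U2 M F) (hc : ContractEdgeF F F')
    (ρ : β) : ¬ IsAFρ ρ U1 U2 F' := by
  obtain ⟨l1, G, l2, C, rfl, hCG, -, hCnb, rfl⟩ := hc
  intro hAF
  have hrep : ReplaceIn (l1 ++ G :: l2) (l1 ++ G.erase C :: l2) G [G.erase C] :=
    ⟨l1, l2, rfl, by simp⟩
  have hin := hE.inputCluster_of_not_isBlock hrep.mem hCG hCnb
  have hCU : C ⊆ grd U1 :=
    hin.elim subset_grd_of_mem_restr fun h => hAF.2.1 ▸ subset_grd_of_mem_restr h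
  -- the taxa of `C` can only be covered by the contracted component itself
  have hcov : C ⊆ grd (G.erase C) := fun x hx => by
    obtain ⟨H, hH, hxH⟩ := mem_foldr_grd.1 (hAF.1.2.2 ▸ hCU hx)
    rcases hrep.mem_new_or_disjoint hE.disjoint hH with hH | ⟨-, hHG⟩
    · exact List.mem_singleton.1 hH ▸ hxH
    · exact absurd (subset_grd hCG hx) (Finset.disjoint_left.1 hHG hxH)
  have hsub := grd_mono (G.erase_subset C)
  have href := hAF.2.2.2.1 _ (hrep.mem_of_mem_new (List.mem_singleton_self _))
  refine Finset.notMem_erase C G ?_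
  rcases hin with h | h
  · exact href.1.1 (mem_restr_of_subset h hcov hsub)
  · exact href.2.1 (mem_restr_of_subset h hcov hsub)

end ExpansionInv

/-- Every agreement forest reported by allMulMAFs is
relevant: contracting any edge destroys the agreement-forest property. -/
theorem allMulMAFs_output_is_relevant
    {β : Type} [DecidableEq β] (X : Finset β) (ρ : β) (hρ : ρ ∉ X)
    (T1 T2 : Clus β) (h1 : IsPhylo X T1) (h2 : IsPhylo X T2) (k : ℕ) (F : List (Clus β))
    (h : AMFRun T1 T2 ρ k F) :
    ∀ F', ContractEdgeF F F' → ¬ IsAF X ρ T1 T2 F' := by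
  intro F' hc
  obtain ⟨s, hrun, hleaf, -, hexp⟩ := h
  have hs := runInv_of_run hρ h1 h2 hrun
  exact ((hs.expansionInv hleaf).expands hs.split_M hexp.1).not_isAFρ_of_contractEdgeF hc ρ

end Phylo
end

section
/- For any two rooted (nonbinary) phylogenetic 𝒳-trees T1 and T2 and any k ∈ ℕ, every computational path of allMulMAFs(T1, {T2}, ∅, k) terminates: in each recursive call either the number of nodes of R strictly decreases (removal of a leaf referring to an isolated node, or contraction of a common cherry) or the number of components of ℱ strictly increases (cutting of at least one edge), and a path stops as soon as R consists of a single leaf or ℱ has more than k components. -/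
open scoped Classical

namespace Phylo

/-! ## Rooted multifurcating phylogenetic trees, encoded as laminar families of clusters.

A rooted (possibly multi-labeled) tree is identified with the family of clusters
(= sets of taxa below a node) of its nodes.  Leaves are the minimal clusters
("blocks"); in an ordinary phylogenetic tree all blocks are singletons, while the
trees manipulated by the algorithm may carry set labels (contracted cherries). -/

variable {β : Type} [DecidableEq β]

/-! The rank of a state is the pair (number of clusters of `R`, `k + 1` minus the number of
components of `F`): Cases 1c and 2 lower the first entry, Cases 3a and 3b keep `R` and lower
the second, which is positive while the guard `|F| ≤ k` holds, so truncated subtraction does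
no harm. Hence the rank strictly decreases lexicographically along every path.

The only non-bookkeeping point is that Case 3b cuts at least one edge: since `{A, C}` is not
a cherry of its component, the parent of `A` or that of `C` lies strictly below their lowest
common ancestor and carries a nonempty pendant subtree. -/

lemma ReplaceIn.length_add_one {α : Type} {F F' : List (Clus α)} {G : Clus α}
    {new : List (Clus α)} (h : ReplaceIn F F' G new) : F'.length + 1 = F.length + new.length := by
  obtain ⟨l1, l2, rfl, rfl⟩ := h
  simp only [List.length_append, List.length_cons]
  omega

lemma card_rmBlock_lt {R : Clus β} {A : Finset β} (hA : A ∈ R) :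
    (rmBlock R A).card < R.card := by
  have hempty : (∅ : Finset β) ∈ R.image (· ∩ (grd R \ A)) :=
    Finset.mem_image.mpr ⟨A, hA, by simp⟩
  calc (rmBlock R A).card = (R.image (· ∩ (grd R \ A))).card - 1 :=
        Finset.card_erase_of_mem hempty
    _ < (R.image (· ∩ (grd R \ A))).card :=
        Nat.sub_lt (Finset.card_pos.mpr ⟨∅, hempty⟩) one_pos
    _ ≤ R.card := Finset.card_image_le

lemma card_conCh_lt {G : Clus β} {A C : Finset β} (hA : A ∈ G) (hC : C ∈ G) (hne : A ≠ C) :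
    (conCh G A C).card < G.card := by
  have hCA : C ∈ G.erase A := Finset.mem_erase.mpr ⟨hne.symm, hC⟩
  calc (conCh G A C).card ≤ ((G.erase A).erase C).card + 1 := Finset.card_insert_le _ _
    _ = (G.erase A).card := Finset.card_erase_add_one hCA
    _ < G.card := Finset.card_erase_lt_of_mem hA

lemma PathNode.symm {G : Clus β} {A C D : Finset β} (h : PathNode G C A D) :
    PathNode G A C D := by
  obtain ⟨hD, hDC, hDA, hpos⟩ := h
  refine ⟨hD, hDA, hDC, ?_⟩
  rw [Finset.union_comm] at hpos
  tauto

lemma PendGround.symm {G : Clus β} {A C D P : Finset β} (h : PendGround G C A D P) :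
    PendGround G A C D P := by
  obtain ⟨hpath, hside | hside | ⟨hL, E1, E2, hE1, hE2, rfl⟩⟩ := h
  · exact ⟨hpath.symm, Or.inr (Or.inl hside)⟩
  · exact ⟨hpath.symm, Or.inl hside⟩
  · rw [Finset.union_comm] at hL
    exact ⟨hpath.symm, Or.inr (Or.inr ⟨hL, E2, E1, hE2, hE1, by rw [Finset.union_comm]⟩)⟩

lemma exists_isChild_subset {G : Clus β} {A L : Finset β} (hA : A ∈ G) (hL : L ∈ G)
    (hAL : A ⊂ L) : ∃ P, IsChild G A P ∧ P ⊆ L := by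
  obtain ⟨P, ⟨hP, hAP, hPL⟩, hmin⟩ :=
    exists_minimal_of_wellFoundedLT (fun D => D ∈ G ∧ A ⊂ D ∧ D ⊆ L) ⟨L, hL, hAL, le_rfl⟩
  refine ⟨P, ⟨hA, hP, hAP, fun E hE hAE hEP => ?_⟩, hPL⟩
  by_contra hEA
  have hAE' : A ⊂ E := hAE.ssubset_of_ne (Ne.symm hEA)
  exact hEP.not_subset (hmin ⟨hE, hAE', hEP.subset.trans hPL⟩ hEP.subset)

lemma pendGround_of_isChild {G : Clus β} {A C P : Finset β} (hAP : IsChild G A P)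
    (hCP : ¬ C ⊆ P) : PendGround G A C P (P \ A) ∧ (P \ A).Nonempty := by
  obtain ⟨hA, hP, hAP, hmax⟩ := hAP
  refine ⟨⟨⟨hP, hAP.ne', fun h => hCP h.ge, Or.inl ⟨hAP.subset, hCP⟩⟩,
    Or.inl ⟨hAP.subset, hCP, A, ⟨hA, subset_rfl, hAP, fun E hE hAE hEP => ?_⟩, rfl⟩⟩,
    Finset.sdiff_nonempty.mpr hAP.not_subset⟩
  exact (hmax E hE hAE hEP).le

lemma ssubset_of_isBlock_of_isLca {G : Clus β} {A C L : Finset β} (hA : IsBlock G A)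
    (hC : C ∈ G) (hne : A ≠ C) (hL : IsLca G (A ∪ C) L) : A ⊂ L := by
  refine (Finset.union_subset_iff.mp hL.2.1).1.ssubset_of_ne fun hAL => hne ?_
  exact (hA.2 C hC (hAL ▸ (Finset.union_subset_iff.mp hL.2.1).2)).symm

lemma exists_pendGround_of_not_cherryOf {G : Clus β} {A C L : Finset β}
    (hA : IsBlock G A) (hC : IsBlock G C) (hne : A ≠ C)
    (hnch : ¬ CherryOf G A C) (hL : IsLca G (A ∪ C) L) :
    ∃ D P, PendGround G A C D P ∧ P.Nonempty := by
  have hAL := ssubset_of_isBlock_of_isLca hA hC.1 hne hL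
  have hCL := ssubset_of_isBlock_of_isLca hC hA.1 hne.symm (Finset.union_comm A C ▸ hL)
  obtain ⟨P, hAP, hPL⟩ := exists_isChild_subset hA.1 hL.1 hAL
  obtain ⟨Q, hCQ, hQL⟩ := exists_isChild_subset hC.1 hL.1 hCL
  by_cases hCP : C ⊆ P
  · by_cases hAQ : A ⊆ Q
    · have hPeq : P = L :=
        hPL.antisymm (hL.2.2 P hAP.2.1 (Finset.union_subset hAP.2.2.1.subset hCP))
      have hQeq : Q = L :=
        hQL.antisymm (hL.2.2 Q hCQ.2.1 (Finset.union_subset hAQ hCQ.2.2.1.subset))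
      exact absurd ⟨hne, hA, hC, L, hPeq ▸ hAP, hQeq ▸ hCQ⟩ hnch
    · obtain ⟨hpend, hP⟩ := pendGround_of_isChild hCQ hAQ
      exact ⟨Q, Q \ C, hpend.symm, hP⟩
  · exact ⟨P, P \ A, pendGround_of_isChild hAP hCP⟩

lemma IsolApply.card_lt {s t : St β} {A : Finset β} (h : IsolApply s A t) :
    t.1.card < s.1.card ∧ t.2.1.length = s.2.1.length := by
  obtain ⟨hiso, rfl⟩ := h
  exact ⟨card_rmBlock_lt hiso.1.1, rfl⟩

lemma ConApply.card_lt {s t : St β} {A C : Finset β} (h : ConApply s A C t) :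
    t.1.card < s.1.card ∧ t.2.1.length = s.2.1.length := by
  obtain ⟨⟨⟨hne, P, hAP, hCP, -⟩, -⟩, G, F', -, -, hrep, -, -, -, -, -, -, rfl⟩ := h
  have := hrep.length_add_one
  exact ⟨card_conCh_lt hAP.1 hCP.1 hne, by simpa using this⟩

lemma CutApply.length_lt {s t : St β} {A C : Finset β} (h : CutApply s A C t) :
    t.1 = s.1 ∧ s.2.1.length < t.2.1.length := by
  obtain ⟨-, G, F', M', -, -, hrep, -, rfl⟩ := h
  have := hrep.length_add_one
  simp only [List.length_cons, List.length_nil] at this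
  exact ⟨rfl, by dsimp only; omega⟩

lemma CutPend.length_ge_two {G : Clus β} {A C : Finset β} {new : List (Clus β)}
    (hA : IsBlock G A) (hC : IsBlock G C) (hne : A ≠ C) (hnch : ¬ CherryOf G A C)
    (h : CutPend G A C new) : 2 ≤ new.length := by
  obtain ⟨L, hL, pend, -, hcomplete, -, rfl⟩ := h
  obtain ⟨D, P, hpend, hP⟩ := exists_pendGround_of_not_cherryOf hA hC hne hnch hL
  have : pend ≠ [] := List.ne_nil_of_mem (hcomplete D P hpend hP)
  simpa [Nat.one_le_iff_ne_zero] using this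

lemma PendApply.length_lt {s t : St β} {A C : Finset β} (h : PendApply s A C t) :
    t.1 = s.1 ∧ s.2.1.length < t.2.1.length := by
  obtain ⟨⟨⟨hne, -⟩, hnch⟩, G, new, F', M', hG, hA, hC, hcut, hrep, -, rfl⟩ := h
  have := hcut.length_ge_two hA hC hne fun hch => hnch ⟨G, hG, hch⟩
  have := hrep.length_add_one
  exact ⟨rfl, by dsimp only; omega⟩

lemma AMFStep.card_lt_or_length_lt {k : ℕ} {s t : St β} (h : AMFStep k s t) :
    (t.1.card < s.1.card ∧ t.2.1.length = s.2.1.length) ∨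
      (t.1 = s.1 ∧ s.2.1.length < t.2.1.length) := by
  obtain ⟨-, -, ⟨A, hiso⟩ | ⟨-, A, C, hcon⟩ | ⟨-, -, A, C, hcut | hpend⟩⟩ := h
  · exact Or.inl hiso.card_lt
  · exact Or.inl hcon.card_lt
  · exact Or.inr hcut.length_lt
  · exact Or.inr hpend.length_lt

noncomputable def amfRank (k : ℕ) (s : St β) : ℕ ×ₗ ℕ :=
  toLex (s.1.card, k + 1 - s.2.1.length)

lemma AMFStep.amfRank_lt {k : ℕ} {s t : St β} (h : AMFStep k s t) :
    amfRank k t < amfRank k s := by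
  rw [amfRank, amfRank, Prod.Lex.toLex_lt_toLex]
  rcases h.card_lt_or_length_lt with ⟨hcard, -⟩ | ⟨hR, hlen⟩
  · exact Or.inl hcard
  · have hs : s.2.1.length ≤ k := h.1
    exact Or.inr ⟨by rw [hR], by dsimp only; omega⟩

theorem allMulMAFs_terminates_general
    {β : Type} [DecidableEq β] (ρ : β)
    (T1 T2 : Clus β) (k : ℕ) :
    (∀ s t : St β, AMFStep k s t → t.1.card < s.1.card ∨ s.2.1.length < t.2.1.length) ∧
    (∀ s t : St β, AMFStep k s t → ¬ SingleLeaf s.1 ∧ s.2.1.length ≤ k) ∧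
    ¬ ∃ f : ℕ → St β, f 0 = initSt T1 T2 ρ ∧ ∀ n, AMFStep k (f n) (f (n + 1)) := by
  refine ⟨fun s t h => h.card_lt_or_length_lt.imp And.left And.right,
    fun s t h => ⟨h.2.1, h.1⟩, ?_⟩
  rintro ⟨f, -, hf⟩
  obtain ⟨n, hn⟩ := WellFounded.not_rel_apply_succ (r := (· < ·)) (amfRank k ∘ f)
  exact hn (hf n).amfRank_lt

/-- Every computational path of allMulMAFs terminates: each
recursive call strictly decreases `R` or strictly increases the number of
components of `F`; a path only continues while `R` is not a single leaf and
`F` has at most `k` components; and there is no infinite computation path. -/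
theorem allMulMAFs_terminates
    {β : Type} [DecidableEq β] (X : Finset β) (ρ : β) (hρ : ρ ∉ X)
    (T1 T2 : Clus β) (h1 : IsPhylo X T1) (h2 : IsPhylo X T2) (k : ℕ) :
    (∀ s t : St β, AMFStep k s t → t.1.card < s.1.card ∨ s.2.1.length < t.2.1.length) ∧
    (∀ s t : St β, AMFStep k s t → ¬ SingleLeaf s.1 ∧ s.2.1.length ≤ k) ∧
    ¬ ∃ f : ℕ → St β, f 0 = initSt T1 T2 ρ ∧ ∀ n, AMFStep k (f n) (f (n + 1)) :=
  allMulMAFs_terminates_general ρ T1 T2 k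

end Phylo
end
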